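/- arXiv:1405.6808 — 4 statements merged into one kernel-verified Lean document; each statement's English description precedes it below -/
import Mathlib

section
/- Suppose that (G_n) is a p-quasi-random sequence of graphs, where 0 ≤ p ≤ 1, and let F be a fixed labelled graph with e(F) > 0 and m = |F| vertices. Then for all (not necessarily disjoint) subsets U_1,…,U_m of V(G_n), one has N(F,G_n;U_1,…,U_m) = p^{e(F)} ∏_{i=1}^m |U_i| + o(|G_n|^m) and Ñ(F,G_n;U_1,…,U_m) = p^{e(F)} ∏_{i=1}^m |U_i| + o(|G_n|^m), where the o(|G_n|^m) bounds are uniform over all choices of the subsets. -/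
open Filter Finset Asymptotics MeasureTheory

/-- `labCount F G U` is the number of injective graph homomorphisms `φ : F → G`
with `φ i ∈ U i` for every vertex `i` of `F` (the quantity `N(F,G;U₁,…,U_m)`). -/
noncomputable def labCount {m : ℕ} {β : Type} [Fintype β]
    (F : SimpleGraph (Fin m)) (G : SimpleGraph β) (U : Fin m → Finset β) : ℕ :=
  Nat.card {φ : Fin m → β //
    Function.Injective φ ∧ (∀ i j, F.Adj i j → G.Adj (φ i) (φ j)) ∧ ∀ i, φ i ∈ U i}

/-- `totalCount F G` is the total number of injective graph homomorphisms `F → G`,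
the quantity `N(F,G)`. -/
noncomputable def totalCount {m : ℕ} {β : Type} [Fintype β]
    (F : SimpleGraph (Fin m)) (G : SimpleGraph β) : ℕ :=
  Nat.card {φ : Fin m → β //
    Function.Injective φ ∧ ∀ i j, F.Adj i j → G.Adj (φ i) (φ j)}

/-- `symCount F G U` is `Ñ(F,G;U₁,…,U_m) = (1/m!) ∑_σ N(F,G;U_{σ(1)},…,U_{σ(m)})`. -/
noncomputable def symCount {m : ℕ} {β : Type} [Fintype β]
    (F : SimpleGraph (Fin m)) (G : SimpleGraph β) (U : Fin m → Finset β) : ℝ :=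
  ((m.factorial : ℝ))⁻¹ * ∑ σ : Equiv.Perm (Fin m), (labCount F G (fun i => U (σ i)) : ℝ)

/-- `numEdges F` is `e(F)`, the number of edges of `F`. -/
noncomputable def numEdges {m : ℕ} (F : SimpleGraph (Fin m)) : ℕ := Nat.card F.edgeSet

/-- A sequence of graphs `G n` on vertex sets `Fin (V n)` is `p`-quasi-random if, for every
finite simple graph `F`, `N(F,G_n) = p^(e F) |G_n|^(|F|) + o(|G_n|^(|F|))`. -/
def IsQuasirandom (p : ℝ) (V : ℕ → ℕ) (G : ∀ n, SimpleGraph (Fin (V n))) : Prop :=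
  ∀ (m : ℕ) (F : SimpleGraph (Fin m)),
    (fun n => (totalCount F (G n) : ℝ) - p ^ numEdges F * (V n : ℝ) ^ m)
      =o[atTop] (fun n => (V n : ℝ) ^ m)

/-- The property `P(F;α₁,…,α_m)`: `N(F,G_n;U₁,…,U_m) = p^(e F) ∏ |U_i| + o(|G_n|^m)`,
uniformly over all pairwise disjoint `U₁,…,U_m ⊆ V(G_n)` with `|U_i| = ⌊α_i |G_n|⌋`. -/
def SatisfiesP {m : ℕ} (F : SimpleGraph (Fin m)) (p : ℝ) (α : Fin m → ℝ)
    (V : ℕ → ℕ) (G : ∀ n, SimpleGraph (Fin (V n))) : Prop :=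
  ∃ ε : ℕ → ℝ, Tendsto ε atTop (nhds 0) ∧
    ∀ (n : ℕ) (U : Fin m → Finset (Fin (V n))),
      Pairwise (fun i j => Disjoint (U i) (U j)) →
      (∀ i, (U i).card = ⌊α i * (V n : ℝ)⌋₊) →
      |(labCount F (G n) U : ℝ) - p ^ numEdges F * ∏ i, ((U i).card : ℝ)|
        ≤ ε n * (V n : ℝ) ^ m

/-- The property `P̃(F;α₁,…,α_m)`: as `SatisfiesP` but with the symmetrized count `Ñ`. -/
def SatisfiesPt {m : ℕ} (F : SimpleGraph (Fin m)) (p : ℝ) (α : Fin m → ℝ)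
    (V : ℕ → ℕ) (G : ∀ n, SimpleGraph (Fin (V n))) : Prop :=
  ∃ ε : ℕ → ℝ, Tendsto ε atTop (nhds 0) ∧
    ∀ (n : ℕ) (U : Fin m → Finset (Fin (V n))),
      Pairwise (fun i j => Disjoint (U i) (U j)) →
      (∀ i, (U i).card = ⌊α i * (V n : ℝ)⌋₊) →
      |symCount F (G n) U - p ^ numEdges F * ∏ i, ((U i).card : ℝ)|
        ≤ ε n * (V n : ℝ) ^ m

/-- The property `Pᵘ(F;α₁,…,α_m)`: `P` holds for every labelling of `F`. -/
def SatisfiesPu {m : ℕ} (F : SimpleGraph (Fin m)) (p : ℝ) (α : Fin m → ℝ)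
    (V : ℕ → ℕ) (G : ∀ n, SimpleGraph (Fin (V n))) : Prop :=
  ∀ σ : Equiv.Perm (Fin m), SatisfiesP (SimpleGraph.map σ.toEmbedding F) p α V G

/-!
Write `f = 𝟙_G - p` for the deviation of the adjacency matrix of `G` from `p`. Two applications
of Cauchy–Schwarz bound every bilinear form `∑ f(x, y) g(x) h(y)` with `[0, 1]`-valued `g, h` by
`|G|` times the fourth root of the 4-cycle count of `f`. Expanding the product over the edges of
`C₄` writes that count as a signed sum of homomorphism counts of subgraphs of `C₄`, so
quasi-randomness makes it `o(|G|⁴)`. Replacing the edges of `F` one at a time by the constant `p`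
then changes the vertex-weighted homomorphism count of `F` by `o(|G|^m)` per edge; non-injective
maps contribute only `O(|G|^(m-1))`, and `Ñ` is an average of labelled counts.
-/

namespace QuasirandomCounting

open Function

variable {β : Type} {k : ℕ}

theorem sum_sum_update {ι α M : Type*} [Fintype ι] [DecidableEq ι] [Fintype α]
    [AddCommMonoid M] (i : ι) (Y : (ι → α) → M) :
    ∑ ψ, ∑ x, Y (update ψ i x) = Fintype.card α • ∑ φ, Y φ := by
  have hinv : Involutive fun q : (ι → α) × α => (update q.1 i q.2, q.1 i) := by
    rintro ⟨ψ, x⟩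
    simp
  rw [← Fintype.sum_prod_type',
    Fintype.sum_equiv hinv.toPerm (fun q => Y (update q.1 i q.2)) (fun q => Y q.1) fun _ => rfl,
    Fintype.sum_prod_type, Finset.sum_comm]
  simp only [Finset.sum_const, Finset.card_univ, Finset.smul_sum]

theorem sum_fin_succ_pi {n : ℕ} {α M : Type*} [Fintype α] [AddCommMonoid M]
    (f : (Fin (n + 1) → α) → M) : ∑ φ, f φ = ∑ a, ∑ ψ : Fin n → α, f (Fin.cons a ψ) := by
  rw [← Fintype.sum_prod_type', ← Fintype.sum_equiv (Fin.consEquiv fun _ => α) _ _ fun _ => rfl]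
  rfl

theorem card_filter_apply_eq_apply_le [Fintype β] [DecidableEq β] {a b : Fin k}
    (hab : a ≠ b) :
    #{φ : Fin k → β | φ a = φ b} ≤ Fintype.card β ^ (k - 1) := by
  have hcard : Fintype.card ({c : Fin k // c ≠ b} → β) = Fintype.card β ^ (k - 1) := by
    simp [Fintype.card_subtype_compl]
  rw [← hcard, ← Finset.card_univ]
  refine Finset.card_le_card_of_injOn (fun φ c => φ c.1) (fun _ _ => Finset.mem_univ _) ?_
  intro φ hφ φ' hφ' h
  simp only [Finset.coe_filter, Finset.mem_univ, true_and] at hφ hφ'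
  funext c
  by_cases hc : c = b
  · subst hc
    rw [← hφ, ← hφ']
    exact congrFun h ⟨a, hab⟩
  · exact congrFun h ⟨c, hc⟩

theorem card_filter_not_injective_le [Fintype β] [DecidableEq β] :
    #{φ : Fin k → β | ¬Injective φ} ≤ k * (k - 1) * Fintype.card β ^ (k - 1) := by
  calc #{φ : Fin k → β | ¬Injective φ}
      ≤ #((univ : Finset (Fin k)).offDiag.biUnion
          fun q => {φ : Fin k → β | φ q.1 = φ q.2}) := by
        refine Finset.card_le_card fun φ hφ => ?_
        obtain ⟨a, b, hφab, hab⟩ : ∃ a b, φ a = φ b ∧ a ≠ b := by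
          simpa [Injective, and_comm] using hφ
        exact Finset.mem_biUnion.2 ⟨(a, b), by simpa using hab, by simpa using hφab⟩
    _ ≤ ∑ q ∈ (univ : Finset (Fin k)).offDiag, #{φ : Fin k → β | φ q.1 = φ q.2} :=
        Finset.card_biUnion_le
    _ ≤ ∑ _q ∈ (univ : Finset (Fin k)).offDiag, Fintype.card β ^ (k - 1) :=
        Finset.sum_le_sum fun q hq =>
          card_filter_apply_eq_apply_le (Finset.mem_offDiag.1 hq).2.2
    _ = k * (k - 1) * Fintype.card β ^ (k - 1) := by
        simp [Finset.offDiag_card, Nat.mul_sub_one]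

section Counting

variable (G : SimpleGraph β) (p : ℝ)

open Classical in
noncomputable def edgeInd (φ : Fin k → β) (e : Sym2 (Fin k)) : ℝ :=
  if e.map φ ∈ G.edgeSet then 1 else 0

open Classical in
noncomputable def dev (x y : β) : ℝ :=
  (if G.Adj x y then 1 else 0) - p

theorem edgeInd_mk (φ : Fin k → β) (a b : Fin k) :
    edgeInd G φ s(a, b) = dev G p (φ a) (φ b) + p := by
  unfold edgeInd dev
  rw [Sym2.map_mk]
  split_ifs <;> simp_all

theorem edgeInd_mem_unitInterval (φ : Fin k → β) (e : Sym2 (Fin k)) :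
    edgeInd G φ e ∈ unitInterval := by
  unfold edgeInd
  split_ifs <;> simp

theorem edgeInd_update_of_notMem {φ : Fin k → β} {e : Sym2 (Fin k)} {a : Fin k} (ha : a ∉ e)
    (x : β) : edgeInd G (update φ a x) e = edgeInd G φ e := by
  rw [edgeInd, edgeInd,
    Sym2.map_congr fun b hb => update_of_ne (ne_of_mem_of_not_mem hb ha) x φ]

noncomputable def homWeight (s : Finset (Sym2 (Fin k))) (u : Fin k → β → ℝ) (φ : Fin k → β) :
    ℝ :=
  (∏ e ∈ s, edgeInd G φ e) * ∏ v, u v (φ v)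

variable [Fintype β]

noncomputable def homSum (s : Finset (Sym2 (Fin k))) (u : Fin k → β → ℝ) : ℝ :=
  ∑ φ, homWeight G s u φ

theorem homSum_empty (u : Fin k → β → ℝ) : homSum G ∅ u = ∏ v, ∑ x, u v x := by
  simp [homSum, homWeight, Fintype.prod_sum]

theorem homSum_insert {s : Finset (Sym2 (Fin k))} {i j : Fin k} (h : s(i, j) ∉ s)
    (u : Fin k → β → ℝ) :
    homSum G (insert s(i, j) s) u
      = ∑ φ, dev G p (φ i) (φ j) * homWeight G s u φ + p * homSum G s u := by
  simp only [homSum, homWeight, Finset.prod_insert h, edgeInd_mk G p, Finset.mul_sum,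
    ← Finset.sum_add_distrib]
  exact Finset.sum_congr rfl fun φ _ => by ring

def IsWeightedUniform (δ : ℝ) : Prop :=
  ∀ g h : β → ℝ, (∀ x, g x ∈ unitInterval) → (∀ y, h y ∈ unitInterval) →
    |∑ x, ∑ y, dev G p x y * g x * h y| ≤ δ * Fintype.card β ^ 2

theorem abs_sum_dev_mul_mul_le {δ : ℝ} (hG : IsWeightedUniform G p δ) {i j : Fin k}
    (hij : i ≠ j) (A B : (Fin k → β) → ℝ) (hA : ∀ φ, A φ ∈ unitInterval)
    (hB : ∀ φ, B φ ∈ unitInterval) (hAj : ∀ φ y, A (update φ j y) = A φ)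
    (hBi : ∀ φ x, B (update φ i x) = B φ) :
    |∑ φ, dev G p (φ i) (φ j) * A φ * B φ| ≤ δ * Fintype.card β ^ k := by
  obtain hβ | hβ := isEmpty_or_nonempty β
  · have : Nonempty (Fin k) := ⟨i⟩
    simp [Fintype.card_eq_zero, zero_pow (Fin.pos i).ne']
  set N : ℝ := (Fintype.card β : ℝ)
  set X : (Fin k → β) → ℝ := fun φ => dev G p (φ i) (φ j) * A φ * B φ
  -- Resampling the coordinates `i` and `j` covers every map exactly `N²` times.
  have hresample : ∑ ψ, ∑ x, ∑ y, X (update (update ψ i x) j y) = N ^ 2 * ∑ φ, X φ := by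
    rw [sum_sum_update i fun ψ => ∑ y, X (update ψ j y), sum_sum_update j X, smul_smul,
      nsmul_eq_mul]
    push_cast
    ring
  have hfiber (ψ : Fin k → β) : |∑ x, ∑ y, X (update (update ψ i x) j y)| ≤ δ * N ^ 2 := by
    have hX (x y : β) : X (update (update ψ i x) j y)
        = dev G p x y * A (update ψ i x) * B (update ψ j y) := by
      simp only [X, update_self, update_of_ne hij, hAj]
      rw [update_comm hij, hBi]
    simp only [hX]
    exact hG _ _ (fun x => hA _) (fun y => hB _)
  have hN : 0 < N := by simp [N, Fintype.card_pos]
  refine le_of_mul_le_mul_left ?_ (pow_pos hN 2)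
  calc N ^ 2 * |∑ φ, X φ| = |∑ ψ, ∑ x, ∑ y, X (update (update ψ i x) j y)| := by
        rw [hresample, abs_mul, abs_of_pos (pow_pos hN 2)]
    _ ≤ ∑ ψ : Fin k → β, δ * N ^ 2 :=
        (Finset.abs_sum_le_sum_abs _ _).trans (Finset.sum_le_sum fun ψ _ => hfiber ψ)
    _ = N ^ 2 * (δ * N ^ k) := by
        simp only [Finset.sum_const, Finset.card_univ, Fintype.card_fun, Fintype.card_fin,
          nsmul_eq_mul, N]
        push_cast
        ring

theorem abs_sum_dev_mul_homWeight_le {δ : ℝ} (hG : IsWeightedUniform G p δ)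
    {s : Finset (Sym2 (Fin k))} {i j : Fin k} (hij : i ≠ j) (hs : s(i, j) ∉ s)
    {u : Fin k → β → ℝ} (hu : ∀ v x, u v x ∈ unitInterval) :
    |∑ φ, dev G p (φ i) (φ j) * homWeight G s u φ| ≤ δ * Fintype.card β ^ k := by
  classical
  -- Edges of `s` through `j` miss `i`, so the weight splits into a factor ignoring `φ j`
  -- and a factor ignoring `φ i`.
  have hmiss {e : Sym2 (Fin k)} (he : e ∈ s) (hje : j ∈ e) : i ∉ e := fun hie =>
    hs ((Sym2.mem_and_mem_iff hij).1 ⟨hie, hje⟩ ▸ he)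
  set A : (Fin k → β) → ℝ := fun φ =>
    (∏ e ∈ s with j ∉ e, edgeInd G φ e) * ∏ v ∈ univ.erase j, u v (φ v)
  set B : (Fin k → β) → ℝ := fun φ => (∏ e ∈ s with j ∈ e, edgeInd G φ e) * u j (φ j)
  have hsplit (φ : Fin k → β) : homWeight G s u φ = A φ * B φ := by
    rw [homWeight, ← Finset.mul_prod_erase univ (fun v => u v (φ v)) (mem_univ j),
      ← Finset.prod_filter_not_mul_prod_filter s (fun e => j ∈ e)]
    ring
  simp only [hsplit, ← mul_assoc]
  refine abs_sum_dev_mul_mul_le G p hG hij A B (fun φ => ?_) (fun φ => ?_) (fun φ y => ?_)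
    (fun φ x => ?_)
  · exact unitInterval.mul_mem
      (unitInterval.prod_mem fun e _ => edgeInd_mem_unitInterval G φ e)
      (unitInterval.prod_mem fun v _ => hu v _)
  · exact unitInterval.mul_mem
      (unitInterval.prod_mem fun e _ => edgeInd_mem_unitInterval G φ e) (hu j _)
  · simp only [A]
    congr 1
    · refine Finset.prod_congr rfl fun e he => edgeInd_update_of_notMem G ?_ y
      exact (Finset.mem_filter.1 he).2
    · exact Finset.prod_congr rfl fun v hv => by rw [update_of_ne (Finset.ne_of_mem_erase hv)]
  · simp only [B]
    congr 1
    · refine Finset.prod_congr rfl fun e he => edgeInd_update_of_notMem G ?_ x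
      exact hmiss (Finset.mem_filter.1 he).1 (Finset.mem_filter.1 he).2
    · rw [update_of_ne hij.symm]

theorem abs_homSum_sub_le (hp : |p| ≤ 1) {δ : ℝ} (hG : IsWeightedUniform G p δ)
    {u : Fin k → β → ℝ} (hu : ∀ v x, u v x ∈ unitInterval) {s : Finset (Sym2 (Fin k))}
    (hs : ∀ e ∈ s, ¬e.IsDiag) :
    |homSum G s u - p ^ #s * ∏ v, ∑ x, u v x| ≤ #s * δ * Fintype.card β ^ k := by
  induction s using Finset.induction_on with
  | empty => simp [homSum_empty]
  | @insert e s he ih =>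
    induction e using Sym2.ind with
    | _ i j =>
    have hij : i ≠ j := fun h => hs _ (Finset.mem_insert_self _ _) (Sym2.mk_isDiag_iff.2 h)
    have hrest := ih fun e' he' => hs e' (Finset.mem_insert_of_mem he')
    have hedge := abs_sum_dev_mul_homWeight_le G p hG hij he hu
    rw [homSum_insert G p he, Finset.card_insert_of_notMem he]
    calc _ = |∑ φ, dev G p (φ i) (φ j) * homWeight G s u φ
              + p * (homSum G s u - p ^ #s * ∏ v, ∑ x, u v x)| := by congr 1; ring
      _ ≤ δ * Fintype.card β ^ k + 1 * (#s * δ * Fintype.card β ^ k) := by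
          refine (abs_add_le _ _).trans (add_le_add hedge ?_)
          rw [abs_mul]
          exact mul_le_mul hp hrest (abs_nonneg _) zero_le_one
      _ = _ := by push_cast; ring

end Counting

section LabelledCount

variable [DecidableEq β] (G : SimpleGraph β)

open Classical in
theorem homWeight_edgeFinset_indicator (F : SimpleGraph (Fin k)) [DecidableRel F.Adj]
    (U : Fin k → Finset β) (φ : Fin k → β) :
    homWeight G F.edgeFinset (fun i x => if x ∈ U i then 1 else 0) φ
      = if (∀ i j, F.Adj i j → G.Adj (φ i) (φ j)) ∧ ∀ i, φ i ∈ U i then 1 else 0 := by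
  have hhom : (∀ e ∈ F.edgeFinset, e.map φ ∈ G.edgeSet)
      ↔ ∀ i j, F.Adj i j → G.Adj (φ i) (φ j) := by
    simp [Sym2.forall]
  simp only [homWeight, edgeInd, Finset.prod_boole, hhom, Finset.mem_univ, true_imp_iff,
    ite_zero_mul_ite_zero, one_mul]

theorem abs_labCount_sub_homSum_le [Fintype β] (F : SimpleGraph (Fin k)) [DecidableRel F.Adj]
    (U : Fin k → Finset β) :
    |(labCount F G U : ℝ) - homSum G F.edgeFinset (fun i x => if x ∈ U i then 1 else 0)|
      ≤ (k * (k - 1) : ℕ) * Fintype.card β ^ (k - 1) := by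
  classical
  set P : (Fin k → β) → Prop := fun φ =>
    (∀ i j, F.Adj i j → G.Adj (φ i) (φ j)) ∧ ∀ i, φ i ∈ U i
  have hlab : labCount F G U = #{φ | Injective φ ∧ P φ} := by
    rw [labCount, Nat.card_eq_fintype_card, Fintype.card_subtype]
  have hhom : homSum G F.edgeFinset (fun i x => if x ∈ U i then 1 else 0) = #{φ | P φ} := by
    simp only [homSum, homWeight_edgeFinset_indicator, Finset.sum_boole]
    congr
  -- The maps counted by `homSum` but not by `labCount` are non-injective.
  have hsplit : #{φ | P φ} = #{φ | Injective φ ∧ P φ} + #{φ | ¬Injective φ ∧ P φ} := by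
    rw [← Finset.card_filter_add_card_filter_not (s := {φ | P φ}) Injective,
      Finset.filter_filter, Finset.filter_filter]
    simp only [and_comm]
  have hnoninj : #{φ : Fin k → β | ¬Injective φ ∧ P φ} ≤ #{φ : Fin k → β | ¬Injective φ} :=
    Finset.card_le_card fun φ hφ => by simp_all
  rw [hlab, hhom, hsplit, Nat.cast_add, sub_add_cancel_left, abs_neg, Nat.abs_cast]
  exact_mod_cast hnoninj.trans card_filter_not_injective_le

theorem abs_labCount_sub_le [Fintype β] {p δ : ℝ} (hp : |p| ≤ 1)
    (hG : IsWeightedUniform G p δ) (F : SimpleGraph (Fin k)) (U : Fin k → Finset β) :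
    |(labCount F G U : ℝ) - p ^ numEdges F * ∏ i, (#(U i) : ℝ)|
      ≤ (k * (k - 1) : ℕ) * Fintype.card β ^ (k - 1) + numEdges F * δ * Fintype.card β ^ k := by
  classical
  set u : Fin k → β → ℝ := fun i x => if x ∈ U i then 1 else 0
  have hu (i : Fin k) (x : β) : u i x ∈ unitInterval := by
    simp only [u]
    split_ifs <;> simp
  have hsum (i : Fin k) : ∑ x, u i x = #(U i) := by simp [u]
  have hhom := abs_homSum_sub_le G p hp hG hu fun e => F.not_isDiag_of_mem_edgeFinset
  rw [Finset.prod_congr rfl fun i _ => hsum i, SimpleGraph.edgeFinset_card,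
    ← Nat.card_eq_fintype_card] at hhom
  exact (abs_sub_le _ _ _).trans (add_le_add (abs_labCount_sub_homSum_le G F U) hhom)

end LabelledCount

theorem abs_symCount_sub_le [Fintype β] (G : SimpleGraph β) {F : SimpleGraph (Fin k)}
    {U : Fin k → Finset β} {x B : ℝ}
    (h : ∀ σ : Equiv.Perm (Fin k), |(labCount F G (fun i => U (σ i)) : ℝ) - x| ≤ B) :
    |symCount F G U - x| ≤ B := by
  have hk : (0 : ℝ) < k.factorial := by exact_mod_cast k.factorial_pos
  have hcard : (Fintype.card (Equiv.Perm (Fin k)) : ℝ) = k.factorial := by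
    rw [Fintype.card_perm, Fintype.card_fin]
  have hx : symCount F G U - x
      = (k.factorial : ℝ)⁻¹
          * ∑ σ : Equiv.Perm (Fin k), ((labCount F G (fun i => U (σ i)) : ℝ) - x) := by
    rw [Finset.sum_sub_distrib, Finset.sum_const, Finset.card_univ, nsmul_eq_mul, hcard, mul_sub,
      inv_mul_cancel_left₀ hk.ne', symCount]
  calc |symCount F G U - x|
      ≤ (k.factorial : ℝ)⁻¹
          * ∑ σ : Equiv.Perm (Fin k), |(labCount F G (fun i => U (σ i)) : ℝ) - x| := by
        rw [hx, abs_mul, abs_of_pos (inv_pos.2 hk)]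
        gcongr
        exact Finset.abs_sum_le_sum_abs _ _
    _ ≤ (k.factorial : ℝ)⁻¹ * ∑ _σ : Equiv.Perm (Fin k), B := by gcongr with σ; exact h σ
    _ = B := by
        rw [Finset.sum_const, Finset.card_univ, nsmul_eq_mul, hcard, inv_mul_cancel_left₀ hk.ne']

section FourCycle

variable [Fintype β] (G : SimpleGraph β) (p : ℝ)

/-- The 4-cycle `K_{2,2}` with parts `{0, 1}` and `{2, 3}`, each edge listed from the
`{2, 3}` side so that it matches the argument order of `dev G p x y` with `x ∈ {2, 3}`. -/
def c4Edges : Finset (Sym2 (Fin 4)) := {s(2, 0), s(2, 1), s(3, 0), s(3, 1)}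

/-- The 4-cycle count of `dev G p`, in the form of a sum of squared codegree deviations. -/
noncomputable def c4Dev : ℝ := ∑ y, ∑ y', (∑ x, dev G p x y * dev G p x y') ^ 2

theorem c4Dev_nonneg : 0 ≤ c4Dev G p :=
  Finset.sum_nonneg fun _ _ => Finset.sum_nonneg fun _ _ => sq_nonneg _

theorem c4Dev_eq_sum_prod :
    c4Dev G p = ∑ φ : Fin 4 → β, ∏ e ∈ c4Edges, (edgeInd G φ e - p) := by
  simp only [sum_fin_succ_pi, Fintype.sum_unique, c4Edges]
  refine Finset.sum_congr rfl fun y _ => Finset.sum_congr rfl fun y' _ => ?_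
  rw [sq, Finset.sum_mul_sum]
  refine Finset.sum_congr rfl fun x _ => Finset.sum_congr rfl fun x' _ => ?_
  rw [Finset.prod_insert (by decide), Finset.prod_insert (by decide),
    Finset.prod_insert (by decide), Finset.prod_singleton]
  simp only [edgeInd_mk G p, add_sub_cancel_right]
  change _ = dev G p x y * (dev G p x y' * (dev G p x' y * dev G p x' y'))
  ring

theorem sum_sq_le_card {ι : Type*} [Fintype ι] {f : ι → ℝ} (hf : ∀ i, f i ∈ unitInterval) :
    ∑ i, f i ^ 2 ≤ Fintype.card ι :=
  (Finset.sum_le_sum fun i _ => pow_le_one₀ (hf i).1 (hf i).2).trans (by simp)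

theorem sq_sum_dev_mul_mul_le {g h : β → ℝ} (hg : ∀ x, g x ∈ unitInterval) :
    (∑ x, ∑ y, dev G p x y * g x * h y) ^ 2
      ≤ Fintype.card β * ∑ x, (∑ y, dev G p x y * h y) ^ 2 :=
  calc (∑ x, ∑ y, dev G p x y * g x * h y) ^ 2
        = (∑ x, g x * ∑ y, dev G p x y * h y) ^ 2 := by
        simp only [Finset.mul_sum]
        congr 1
        exact Finset.sum_congr rfl fun x _ => Finset.sum_congr rfl fun y _ => by ring
    _ ≤ (∑ x, g x ^ 2) * ∑ x, (∑ y, dev G p x y * h y) ^ 2 :=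
        Finset.sum_mul_sq_le_sq_mul_sq _ _ _
    _ ≤ _ := by
        gcongr
        exact sum_sq_le_card hg

theorem sum_sq_sum_dev_mul_eq (h : β → ℝ) :
    ∑ x, (∑ y, dev G p x y * h y) ^ 2
      = ∑ q : β × β, h q.1 * h q.2 * ∑ x, dev G p x q.1 * dev G p x q.2 :=
  calc ∑ x, (∑ y, dev G p x y * h y) ^ 2
        = ∑ x, ∑ y, ∑ y', dev G p x y * h y * (dev G p x y' * h y') := by
        simp only [sq, Finset.sum_mul_sum]
    _ = ∑ y, ∑ y', ∑ x, dev G p x y * h y * (dev G p x y' * h y') := by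
        rw [Finset.sum_comm]
        exact Finset.sum_congr rfl fun y _ => Finset.sum_comm
    _ = _ := by
        rw [Fintype.sum_prod_type]
        simp only [Finset.mul_sum]
        exact Finset.sum_congr rfl fun y _ => Finset.sum_congr rfl fun y' _ =>
          Finset.sum_congr rfl fun x _ => by ring

theorem sq_sum_sq_sum_dev_mul_le {h : β → ℝ} (hh : ∀ y, h y ∈ unitInterval) :
    (∑ x, (∑ y, dev G p x y * h y) ^ 2) ^ 2 ≤ Fintype.card β ^ 2 * c4Dev G p := by
  rw [sum_sq_sum_dev_mul_eq, c4Dev, ← Fintype.sum_prod_type']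
  refine (Finset.sum_mul_sq_le_sq_mul_sq _ _ _).trans ?_
  gcongr
  refine (sum_sq_le_card fun q : β × β => unitInterval.mul_mem (hh q.1) (hh q.2)).trans_eq ?_
  rw [Fintype.card_prod]
  push_cast
  ring

theorem sum_dev_mul_mul_pow_four_le {g h : β → ℝ} (hg : ∀ x, g x ∈ unitInterval)
    (hh : ∀ y, h y ∈ unitInterval) :
    (∑ x, ∑ y, dev G p x y * g x * h y) ^ 4 ≤ Fintype.card β ^ 4 * c4Dev G p :=
  calc (∑ x, ∑ y, dev G p x y * g x * h y) ^ 4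
        = ((∑ x, ∑ y, dev G p x y * g x * h y) ^ 2) ^ 2 := by ring
    _ ≤ (Fintype.card β * ∑ x, (∑ y, dev G p x y * h y) ^ 2) ^ 2 := by
        gcongr
        exact sq_sum_dev_mul_mul_le G p hg
    _ ≤ Fintype.card β ^ 2 * (Fintype.card β ^ 2 * c4Dev G p) := by
        rw [mul_pow]
        gcongr
        exact sq_sum_sq_sum_dev_mul_le G p hh
    _ = Fintype.card β ^ 4 * c4Dev G p := by ring

theorem isWeightedUniform_c4Dev :
    IsWeightedUniform G p ((c4Dev G p / Fintype.card β ^ 4) ^ (4⁻¹ : ℝ)) := by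
  intro g h hg hh
  set N : ℝ := (Fintype.card β : ℝ)
  set δ := (c4Dev G p / N ^ 4) ^ (4⁻¹ : ℝ)
  have hδ : 0 ≤ δ := Real.rpow_nonneg (div_nonneg (c4Dev_nonneg G p) (by positivity)) _
  have hδN : (δ * N ^ 2) ^ 4 = N ^ 4 * c4Dev G p := by
    have hδ4 : δ ^ 4 = c4Dev G p / N ^ 4 := by
      simpa using Real.rpow_inv_natCast_pow
        (div_nonneg (c4Dev_nonneg G p) (by positivity : (0 : ℝ) ≤ N ^ 4)) four_ne_zero
    rcases eq_or_ne N 0 with hN | hN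
    · simp [hN]
    · rw [mul_pow, hδ4]
      field_simp
  rw [← pow_le_pow_iff_left₀ (abs_nonneg _) (by positivity) four_ne_zero, hδN,
    Even.pow_abs (by decide)]
  exact sum_dev_mul_mul_pow_four_le G p hg hh

theorem sum_prod_edgeInd_sub_eq (s : Finset (Sym2 (Fin k))) :
    ∑ φ, ∏ e ∈ s, (edgeInd G φ e - p)
      = ∑ t ∈ s.powerset, (-p) ^ #(s \ t) * homSum G t (fun _ _ => 1) := by
  simp only [sub_eq_add_neg, Finset.prod_add, Finset.prod_const]
  rw [Finset.sum_comm]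
  refine Finset.sum_congr rfl fun t _ => ?_
  simp only [homSum, homWeight, Finset.prod_const_one, mul_one, Finset.mul_sum]
  exact Finset.sum_congr rfl fun φ _ => mul_comm _ _

end FourCycle

theorem natCast_mul_pred_mul_pow_pred_le (k : ℕ) {N : ℝ} (hN : 0 ≤ N) :
    ((k * (k - 1) : ℕ) : ℝ) * N ^ (k - 1) ≤ k ^ 2 / N * N ^ k := by
  rcases k with _ | k
  · simp
  rcases hN.eq_or_lt with rfl | hN
  · rcases k with _ | k <;> simp
  rw [pow_succ N, mul_comm _ N, ← mul_assoc, div_mul_cancel₀ _ hN.ne', Nat.add_sub_cancel]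
  gcongr
  push_cast
  nlinarith

theorem edgeSet_fromEdgeSet_of_forall_not_isDiag {V : Type*} {s : Set (Sym2 V)}
    (hs : ∀ e ∈ s, ¬e.IsDiag) : (SimpleGraph.fromEdgeSet s).edgeSet = s := by
  rw [SimpleGraph.edgeSet_fromEdgeSet, sdiff_eq_left]
  exact Set.disjoint_left.2 fun e he hdiag => hs e he (Sym2.mem_diagSet.1 hdiag)

theorem numEdges_fromEdgeSet {s : Finset (Sym2 (Fin k))} (hs : ∀ e ∈ s, ¬e.IsDiag) :
    numEdges (SimpleGraph.fromEdgeSet (s : Set (Sym2 (Fin k)))) = #s := by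
  rw [numEdges, edgeSet_fromEdgeSet_of_forall_not_isDiag hs, Nat.card_coe_set_eq,
    Set.ncard_coe_finset]

theorem labCount_univ [Fintype β] (F : SimpleGraph (Fin k)) (G : SimpleGraph β) :
    labCount F G (fun _ => univ) = totalCount F G := by
  simp [labCount, totalCount]

theorem abs_homSum_one_sub_totalCount_le [Fintype β] [DecidableEq β] (G : SimpleGraph β)
    {s : Finset (Sym2 (Fin k))} (hs : ∀ e ∈ s, ¬e.IsDiag) :
    |homSum G s (fun _ _ => 1) - totalCount (SimpleGraph.fromEdgeSet (s : Set (Sym2 (Fin k)))) G|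
      ≤ k ^ 2 / Fintype.card β * Fintype.card β ^ k := by
  classical
  set H := SimpleGraph.fromEdgeSet (s : Set (Sym2 (Fin k)))
  have hHs (_ : Fintype H.edgeSet) : H.edgeFinset = s := by
    ext e
    rw [SimpleGraph.mem_edgeFinset, edgeSet_fromEdgeSet_of_forall_not_isDiag hs, Finset.mem_coe]
  have h := abs_labCount_sub_homSum_le G H fun _ => univ
  simp only [Finset.mem_univ, if_true, labCount_univ] at h
  rw [hHs _, abs_sub_comm] at h
  exact h.trans (natCast_mul_pred_mul_pow_pred_le k (Nat.cast_nonneg _))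

section Quasirandom

open Topology

variable {p : ℝ} {V : ℕ → ℕ} {G : ∀ n, SimpleGraph (Fin (V n))}

theorem tendsto_homSum_div (hV : Tendsto V atTop atTop) (hQR : IsQuasirandom p V G) {r : ℕ}
    {s : Finset (Sym2 (Fin r))} (hs : ∀ e ∈ s, ¬e.IsDiag) :
    Tendsto (fun n => homSum (G n) s (fun _ _ => 1) / V n ^ r) atTop (𝓝 (p ^ #s)) := by
  set H := SimpleGraph.fromEdgeSet (s : Set (Sym2 (Fin r)))
  have hcount : Tendsto (fun n => ((totalCount H (G n) : ℝ) - p ^ #s * V n ^ r) / V n ^ r)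
      atTop (𝓝 0) := numEdges_fromEdgeSet hs ▸ (hQR r H).tendsto_div_nhds_zero
  have herr : Tendsto (fun n => (homSum (G n) s (fun _ _ => 1) - totalCount H (G n)) / V n ^ r)
      atTop (𝓝 0) := by
    refine squeeze_zero_norm' ?_ (tendsto_const_nhds.div_atTop
      (tendsto_natCast_atTop_atTop.comp hV) : Tendsto (fun n => (r : ℝ) ^ 2 / V n) atTop (𝓝 0))
    filter_upwards [hV.eventually_ge_atTop 1] with n hn
    have hVpos : (0 : ℝ) < V n ^ r := by positivity
    rw [Real.norm_eq_abs, abs_div, abs_of_pos hVpos, div_le_iff₀ hVpos]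
    simpa using abs_homSum_one_sub_totalCount_le (G n) hs
  have hsplit : ∀ᶠ n in atTop, homSum (G n) s (fun _ _ => 1) / V n ^ r
      = p ^ #s + ((totalCount H (G n) - p ^ #s * V n ^ r) / V n ^ r
        + (homSum (G n) s (fun _ _ => 1) - totalCount H (G n)) / V n ^ r) := by
    filter_upwards [hV.eventually_ge_atTop 1] with n hn
    have hVpos : (0 : ℝ) < V n ^ r := by positivity
    field_simp
    ring
  simpa using ((hcount.add herr).const_add (p ^ #s)).congr' (hsplit.mono fun _ h => h.symm)

theorem tendsto_c4Dev_div (hV : Tendsto V atTop atTop) (hQR : IsQuasirandom p V G) :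
    Tendsto (fun n => c4Dev (G n) p / V n ^ 4) atTop (𝓝 0) := by
  have hlim : Tendsto (fun n => ∑ t ∈ c4Edges.powerset,
      (-p) ^ #(c4Edges \ t) * (homSum (G n) t (fun _ _ => 1) / V n ^ 4)) atTop
      (𝓝 (∑ t ∈ c4Edges.powerset, (-p) ^ #(c4Edges \ t) * p ^ #t)) :=
    tendsto_finsetSum _ fun t ht => (tendsto_homSum_div hV hQR fun e he =>
      (by decide : ∀ e ∈ c4Edges, ¬e.IsDiag) e (Finset.mem_powerset.1 ht he)).const_mul _
  -- The limit is the expansion of `∏ e ∈ c4Edges, (p - p)`.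
  have hzero : ∑ t ∈ c4Edges.powerset, (-p) ^ #(c4Edges \ t) * p ^ #t = 0 := by
    have h := Finset.prod_add (fun _ => p) (fun _ => -p) c4Edges
    simp only [Finset.prod_const, add_neg_cancel] at h
    rw [Finset.sum_congr rfl fun t _ => mul_comm _ _, ← h]
    simp [c4Edges]
  rw [hzero] at hlim
  refine hlim.congr fun n => ?_
  rw [c4Dev_eq_sum_prod, sum_prod_edgeInd_sub_eq, Finset.sum_div]
  exact Finset.sum_congr rfl fun t _ => (mul_div_assoc _ _ _).symm

end Quasirandom

end QuasirandomCounting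

open QuasirandomCounting Topology

theorem stmt5_general (p : ℝ) (hp0 : 0 ≤ p) (hp1 : p ≤ 1)
    (V : ℕ → ℕ) (G : ∀ n, SimpleGraph (Fin (V n))) (hV : Tendsto V atTop atTop)
    (hQR : IsQuasirandom p V G)
    {m : ℕ} (F : SimpleGraph (Fin m)) :
    ∃ ε : ℕ → ℝ, Tendsto ε atTop (nhds 0) ∧
      ∀ (n : ℕ) (U : Fin m → Finset (Fin (V n))),
        |(labCount F (G n) U : ℝ) - p ^ numEdges F * ∏ i, ((U i).card : ℝ)|
            ≤ ε n * (V n : ℝ) ^ m ∧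
        |symCount F (G n) U - p ^ numEdges F * ∏ i, ((U i).card : ℝ)|
            ≤ ε n * (V n : ℝ) ^ m := by
  set δ : ℕ → ℝ := fun n => (c4Dev (G n) p / V n ^ 4) ^ (4⁻¹ : ℝ)
  have hδ : Tendsto δ atTop (𝓝 0) := by
    have h := (Real.continuousAt_rpow_const 0 4⁻¹ (Or.inr (by norm_num))).tendsto.comp
      (tendsto_c4Dev_div hV hQR)
    rwa [Real.zero_rpow (by norm_num)] at h
  have hlab (n : ℕ) (U : Fin m → Finset (Fin (V n))) :
      |(labCount F (G n) U : ℝ) - p ^ numEdges F * ∏ i, ((U i).card : ℝ)|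
        ≤ (m ^ 2 / V n + numEdges F * δ n) * V n ^ m := by
    have hG : IsWeightedUniform (G n) p (δ n) := by simpa using isWeightedUniform_c4Dev (G n) p
    have h := abs_labCount_sub_le (G n) (abs_le.2 ⟨by linarith, hp1⟩) hG F U
    rw [Fintype.card_fin] at h
    refine h.trans ((add_le_add_left (natCast_mul_pred_mul_pow_pred_le m (Nat.cast_nonneg _))
      _).trans_eq (by ring))
  refine ⟨fun n => m ^ 2 / V n + numEdges F * δ n, ?_, fun n U => ⟨hlab n U, ?_⟩⟩
  · simpa using (tendsto_const_nhds.div_atTop (tendsto_natCast_atTop_atTop.comp hV)).add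
      (hδ.const_mul (numEdges F : ℝ))
  · refine abs_symCount_sub_le (G n) fun σ => ?_
    simpa [Equiv.prod_comp σ fun i => ((U i).card : ℝ)] using hlab n fun i => U (σ i)

/-- **Lemma (L0).** If `(G_n)` is `p`-quasi-random and `e(F) > 0`, then
`N(F,G_n;U₁,…,U_m) = p^(e F) ∏ |U_i| + o(|G_n|^m)` and likewise for `Ñ`, uniformly
over all (not necessarily disjoint) subsets `U₁,…,U_m ⊆ V(G_n)`. -/
theorem stmt5 (p : ℝ) (hp0 : 0 ≤ p) (hp1 : p ≤ 1)
    (V : ℕ → ℕ) (G : ∀ n, SimpleGraph (Fin (V n))) (hV : Tendsto V atTop atTop)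
    (hQR : IsQuasirandom p V G)
    {m : ℕ} (F : SimpleGraph (Fin m)) (hF : 0 < numEdges F) :
    ∃ ε : ℕ → ℝ, Tendsto ε atTop (nhds 0) ∧
      ∀ (n : ℕ) (U : Fin m → Finset (Fin (V n))),
        |(labCount F (G n) U : ℝ) - p ^ numEdges F * ∏ i, ((U i).card : ℝ)|
            ≤ ε n * (V n : ℝ) ^ m ∧
        |symCount F (G n) U - p ^ numEdges F * ∏ i, ((U i).card : ℝ)|
            ≤ ε n * (V n : ℝ) ^ m :=
  stmt5_general p hp0 hp1 V G hV hQR F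
end

section
/- Let F be a labelled graph with m = |F| vertices, let W be a graphon, let p ∈ [0,1], and let α_1,…,α_m ∈ (0,1) with Σ_{i=1}^m α_i < 1. Then W satisfies P^W(F;α_1,…,α_m) if and only if Ψ_{F,W}(x_1,…,x_m) = p^{e(F)} for a.e. (x_1,…,x_m) ∈ [0,1]^m. -/
/-!
The converse is immediate. For the forward direction fix all sides of the box but the `k`-th.
On the complement `X` of the other sides, `B ↦ ∫_{A₁ × ⋯ × B × ⋯ × A_m} Ψ` is finitely
additive, nonnegative, dominated by `λ`, and constant on sets of measure `α_k`. Since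
`λ(X) ≥ 1 - ∑_{i ≠ k} α_i > α_k`, any two sets of equal small measure can be padded to measure
`α_k` by a common set, so the functional depends only on `λ(B)`; it is then additive and
monotone in `λ(B)`, hence proportional to it. Shrinking the sides one coordinate at a time, the
identity `∫_{∏ A_i} Ψ = p^{e(F)} ∏ λ(A_i)` holds for disjoint sides of any measures `τ_i ≤ α_i`,
in particular for all small cubes centred at points of `(0,1)^m` with distinct coordinates, and
Lebesgue's differentiation theorem gives `Ψ = p^{e(F)}` almost everywhere.
-/

open Filter Finset Asymptotics MeasureTheory

/-- A graphon: a symmetric measurable function `[0,1]² → [0,1]`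
(encoded as a function on all of `ℝ × ℝ`). -/
def IsGraphon (W : ℝ → ℝ → ℝ) : Prop :=
  Measurable (Function.uncurry W) ∧ (∀ x y, W x y = W y x) ∧
    ∀ x y, W x y ∈ Set.Icc (0 : ℝ) 1

open Classical in
/-- `Ψ_{F,W}(x₁,…,x_m) = ∏_{ij ∈ E(F)} W(x_i,x_j)`. -/
noncomputable def psi {m : ℕ} (F : SimpleGraph (Fin m)) (W : ℝ → ℝ → ℝ)
    (x : Fin m → ℝ) : ℝ :=
  ∏ i : Fin m, ∏ j : Fin m, if i < j ∧ F.Adj i j then W (x i) (x j) else 1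

/-- `Ψ̃_{F,W}`, the symmetrization of `Ψ_{F,W}` over the `m` coordinates. -/
noncomputable def psiSym {m : ℕ} (F : SimpleGraph (Fin m)) (W : ℝ → ℝ → ℝ)
    (x : Fin m → ℝ) : ℝ :=
  ((m.factorial : ℝ))⁻¹ * ∑ σ : Equiv.Perm (Fin m), psi F W (fun i => x (σ i))

/-- The unit cube `[0,1]^m`. -/
def unitBox (m : ℕ) : Set (Fin m → ℝ) := Set.univ.pi fun _ => Set.Icc (0 : ℝ) 1

/-- The unit square `[0,1]²`. -/
def unitSquare : Set (ℝ × ℝ) := Set.Icc (0 : ℝ) 1 ×ˢ Set.Icc (0 : ℝ) 1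

/-- The graphon property `P^W(F;α₁,…,α_m)`:
`∫_{A₁×⋯×A_m} Ψ_{F,W} = p^(e F) ∏ λ(A_i)` for all pairwise disjoint measurable
`A₁,…,A_m ⊆ [0,1]` with `λ(A_i) = α_i`. -/
def GraphonP {m : ℕ} (F : SimpleGraph (Fin m)) (W : ℝ → ℝ → ℝ) (p : ℝ)
    (α : Fin m → ℝ) : Prop :=
  ∀ A : Fin m → Set ℝ, (∀ i, MeasurableSet (A i)) → (∀ i, A i ⊆ Set.Icc 0 1) →
    Pairwise (fun i j => Disjoint (A i) (A j)) →
    (∀ i, volume (A i) = ENNReal.ofReal (α i)) →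
    ∫ x in Set.univ.pi A, psi F W x = p ^ numEdges F * ∏ i, α i

/-- The graphon property `P̃^W(F;α₁,…,α_m)`: as `GraphonP` but with `Ψ̃_{F,W}`. -/
def GraphonPt {m : ℕ} (F : SimpleGraph (Fin m)) (W : ℝ → ℝ → ℝ) (p : ℝ)
    (α : Fin m → ℝ) : Prop :=
  ∀ A : Fin m → Set ℝ, (∀ i, MeasurableSet (A i)) → (∀ i, A i ⊆ Set.Icc 0 1) →
    Pairwise (fun i j => Disjoint (A i) (A j)) →
    (∀ i, volume (A i) = ENNReal.ofReal (α i)) →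
    ∫ x in Set.univ.pi A, psiSym F W x = p ^ numEdges F * ∏ i, α i

open scoped ENNReal Topology

lemma volume_ne_top_of_subset_Icc {s : Set ℝ} (hs : s ⊆ Set.Icc 0 1) : volume s ≠ ∞ :=
  ne_top_of_le_ne_top (by simp) (measure_mono hs)

lemma lipschitzWith_measureReal_inter_Iic {S : Set ℝ} (hS : volume S ≠ ∞) :
    LipschitzWith 1 fun t => volume.real (S ∩ Set.Iic t) := by
  have hfin : ∀ t, volume (S ∩ Set.Iic t) ≠ ∞ := fun t =>
    ne_top_of_le_ne_top hS (measure_mono Set.inter_subset_left)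
  refine LipschitzWith.of_le_add fun a b => ?_
  rcases le_total a b with hab | hba
  · have := measureReal_mono (μ := volume)
      (Set.inter_subset_inter_right S (Set.Iic_subset_Iic.2 hab)) (hfin b)
    linarith [dist_nonneg (x := a) (y := b)]
  · have hsub : S ∩ Set.Iic a ⊆ (S ∩ Set.Iic b) ∪ Set.Ioc b a := fun x ⟨hxS, hxa⟩ =>
      (le_or_gt x b).imp (fun hxb => ⟨hxS, hxb⟩) fun hxb => ⟨hxb, hxa⟩
    calc volume.real (S ∩ Set.Iic a) ≤ volume.real (S ∩ Set.Iic b ∪ Set.Ioc b a) :=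
          measureReal_mono hsub (measure_union_ne_top (hfin b) measure_Ioc_lt_top.ne)
      _ ≤ volume.real (S ∩ Set.Iic b) + volume.real (Set.Ioc b a) := measureReal_union_le _ _
      _ = volume.real (S ∩ Set.Iic b) + dist a b := by
          rw [Real.volume_real_Ioc_of_le hba, Real.dist_eq, abs_of_nonneg (by linarith)]

lemma exists_subset_measureReal_eq {S : Set ℝ} (hSm : MeasurableSet S)
    (hS1 : S ⊆ Set.Icc 0 1) {r : ℝ} (hr : 0 ≤ r) (hrS : r ≤ volume.real S) :
    ∃ C ⊆ S, MeasurableSet C ∧ volume.real C = r := by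
  have hbot : S ∩ Set.Iic (-1) = ∅ :=
    Set.eq_empty_of_forall_notMem fun x hx => by
      have := (hS1 hx.1).1; have : x ≤ -1 := hx.2; linarith
  have htop : S ∩ Set.Iic 1 = S := Set.inter_eq_left.2 fun x hx => (hS1 hx).2
  have hr' : r ∈ Set.Icc (volume.real (S ∩ Set.Iic (-1))) (volume.real (S ∩ Set.Iic 1)) := by
    rw [hbot, htop, measureReal_empty]
    exact ⟨hr, hrS⟩
  obtain ⟨t, -, ht⟩ := intermediate_value_Icc (by norm_num)
    (lipschitzWith_measureReal_inter_Iic (volume_ne_top_of_subset_Icc hS1)).continuous.continuousOn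
    hr'
  exact ⟨S ∩ Set.Iic t, Set.inter_subset_left, hSm.inter measurableSet_Iic, ht⟩

section Content

variable {α : Type*} [MeasurableSpace α]

/-- Sierpiński's theorem says that every atomless measure has this property. -/
def HasIntermediateSubsets (μ : Measure α) : Prop :=
  ∀ ⦃S : Set α⦄, MeasurableSet S → ∀ ⦃r : ℝ⦄, 0 ≤ r → r ≤ μ.real S →
    ∃ C ⊆ S, MeasurableSet C ∧ μ.real C = r

structure IsDominatedContent (μ : Measure α) (ν : Set α → ℝ) : Prop where
  add : ∀ ⦃B C⦄, MeasurableSet B → MeasurableSet C → Disjoint B C → ν (B ∪ C) = ν B + ν C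
  nonneg : ∀ ⦃B⦄, MeasurableSet B → 0 ≤ ν B
  le_measureReal : ∀ ⦃B⦄, MeasurableSet B → ν B ≤ μ.real B

namespace IsDominatedContent

variable {μ : Measure α} {ν : Set α → ℝ}

lemma mono (hν : IsDominatedContent μ ν) {B B' : Set α} (hB : MeasurableSet B)
    (hB' : MeasurableSet B') (hBB' : B ⊆ B') : ν B ≤ ν B' := by
  rw [← Set.union_sdiff_cancel hBB', hν.add hB (hB'.diff hB) Set.disjoint_sdiff_right]
  linarith [hν.nonneg (hB'.diff hB)]

lemma eq_zero_of_measureReal_eq_zero (hν : IsDominatedContent μ ν) {B : Set α}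
    (hB : MeasurableSet B) (h0 : μ.real B = 0) : ν B = 0 :=
  le_antisymm (h0 ▸ hν.le_measureReal hB) (hν.nonneg hB)

variable [IsFiniteMeasure μ] {a K : ℝ}

/-- Padding `B` and `B'` by a common set `C` to measure `a` shows `ν B + ν C = K = ν B' + ν C`. -/
lemma eq_of_measureReal_eq_of_disjoint (hν : IsDominatedContent μ ν)
    (hμ : HasIntermediateSubsets μ)
    (hK : ∀ ⦃B⦄, MeasurableSet B → μ.real B = a → ν B = K) {s : ℝ} (hsa : s ≤ a)
    (haμ : a + s ≤ μ.real Set.univ) {B B' : Set α} (hB : MeasurableSet B)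
    (hB' : MeasurableSet B') (hBB' : Disjoint B B') (hBs : μ.real B = s) (hB's : μ.real B' = s) :
    ν B = ν B' := by
  have hs0 : 0 ≤ s := hBs ▸ measureReal_nonneg
  have hroom : a - s ≤ μ.real (B ∪ B')ᶜ := by
    rw [measureReal_compl (hB.union hB'), measureReal_union hBB' hB']
    linarith
  obtain ⟨C, hCc, hC, hCa⟩ := hμ (hB.union hB').compl (by linarith) hroom
  have hpad : ∀ D, MeasurableSet D → D ⊆ B ∪ B' → μ.real D = s → ν D + ν C = K := by
    intro D hD hDBB' hDs
    have hDC : Disjoint D C := Set.disjoint_of_subset hDBB' hCc disjoint_compl_right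
    rw [← hν.add hD hC hDC]
    exact hK (hD.union hC) (by rw [measureReal_union hDC hC, hDs, hCa]; ring)
  linarith [hpad B hB Set.subset_union_left hBs, hpad B' hB' Set.subset_union_right hB's]

lemma eq_of_measureReal_eq (hν : IsDominatedContent μ ν) (hμ : HasIntermediateSubsets μ)
    (hK : ∀ ⦃B⦄, MeasurableSet B → μ.real B = a → ν B = K) {s : ℝ} (hsa : s ≤ a)
    (haμ : a + s ≤ μ.real Set.univ) {B B' : Set α} (hB : MeasurableSet B)
    (hB' : MeasurableSet B') (hBs : μ.real B = s) (hB's : μ.real B' = s) :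
    ν B = ν B' := by
  have hdiff : μ.real (B \ B') = μ.real (B' \ B) := by
    simp only [Measure.real]
    rw [measure_sdiff_symm hB.nullMeasurableSet hB'.nullMeasurableSet ?_ (measure_ne_top _ _)]
    rw [← ofReal_measureReal, ← ofReal_measureReal, hBs, hB's]
  have hle : μ.real (B \ B') ≤ s := hBs ▸ measureReal_mono Set.sdiff_subset
  have hexch : ν (B \ B') = ν (B' \ B) :=
    hν.eq_of_measureReal_eq_of_disjoint hμ hK (hle.trans hsa) (by linarith)
      (hB.diff hB') (hB'.diff hB) disjoint_sdiff_sdiff rfl hdiff.symm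
  have hsplit : ∀ D D', MeasurableSet D → MeasurableSet D' → ν D = ν (D \ D') + ν (D ∩ D') :=
    fun D D' hD hD' => by
      rw [← hν.add (hD.diff hD') (hD.inter hD') (Set.disjoint_sdiff_inter), Set.sdiff_union_inter]
  rw [hsplit B B' hB hB', hsplit B' B hB' hB, hexch, Set.inter_comm]

lemma eq_natCast_mul (hν : IsDominatedContent μ ν) (hμ : HasIntermediateSubsets μ)
    (hK : ∀ ⦃B⦄, MeasurableSet B → μ.real B = a → ν B = K) {u : ℝ} (hua : u ≤ a)
    (haμ : a + u ≤ μ.real Set.univ) {B₀ : Set α} (hB₀ : MeasurableSet B₀) (hB₀u : μ.real B₀ = u)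
    (q : ℕ) {B : Set α} (hB : MeasurableSet B) (hBq : μ.real B = q * u) : ν B = q * ν B₀ := by
  induction q generalizing B with
  | zero => exact hν.eq_zero_of_measureReal_eq_zero hB (by simpa using hBq) ▸ by simp
  | succ q ih =>
    have hu0 : 0 ≤ u := hB₀u ▸ measureReal_nonneg
    obtain ⟨C, hCB, hC, hCu⟩ := hμ hB hu0 (by rw [hBq]; push_cast; nlinarith)
    have hBC : μ.real (B \ C) = q * u := by
      rw [measureReal_sdiff hCB hC, hBq, hCu]; push_cast; ring
    rw [← Set.union_sdiff_cancel hCB, hν.add hC (hB.diff hC) Set.disjoint_sdiff_right,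
      hν.eq_of_measureReal_eq hμ hK hua haμ hC hB₀ hCu hB₀u, ih (hB.diff hC) hBC]
    push_cast; ring

/-- Squeezing `B` between sets whose measures are multiples of `a / N`. -/
lemma abs_sub_le_div (hν : IsDominatedContent μ ν) (hμ : HasIntermediateSubsets μ)
    (hK : ∀ ⦃B⦄, MeasurableSet B → μ.real B = a → ν B = K) (ha : 0 < a) {N : ℕ} (hN : 0 < N)
    (haμ : a + a / N ≤ μ.real Set.univ) {B : Set α} (hB : MeasurableSet B) (hBa : μ.real B ≤ a) :
    |ν B - K * μ.real B / a| ≤ K / N := by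
  set u := a / N with hu
  set t := μ.real B with ht
  have hN0 : (0 : ℝ) < N := Nat.cast_pos.2 hN
  have hu0 : 0 < u := by positivity
  have hua : u ≤ a := div_le_self ha.le (Nat.one_le_cast.2 hN)
  have haμ' : a ≤ μ.real Set.univ := by linarith
  obtain ⟨A, -, hA, hAa⟩ := hμ MeasurableSet.univ ha.le haμ'
  obtain ⟨B₀, -, hB₀, hB₀u⟩ := hμ MeasurableSet.univ hu0.le (by linarith)
  have hK0 : 0 ≤ K := hK hA hAa ▸ hν.nonneg hA
  have hmul : ∀ (q : ℕ) ⦃D⦄, MeasurableSet D → μ.real D = q * u → ν D = q * (K / N) := by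
    have hB₀K : ν B₀ = K / N := by
      rw [eq_div_iff hN0.ne', mul_comm, ← hK hA hAa,
        hν.eq_natCast_mul hμ hK hua haμ hB₀ hB₀u N hA (by rw [hAa, hu]; field_simp)]
    intro q D hD hDq
    rw [hν.eq_natCast_mul hμ hK hua haμ hB₀ hB₀u q hD hDq, hB₀K]
  set q := ⌊t / u⌋₊
  have hqt : q * u ≤ t := (le_div_iff₀ hu0).1 (Nat.floor_le (by positivity))
  have htq : t < (q + 1) * u := (div_lt_iff₀ hu0).1 (Nat.lt_floor_add_one _)
  have hlow : q * (K / N) ≤ ν B := by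
    obtain ⟨C, hCB, hC, hCq⟩ := hμ hB (by positivity) hqt
    exact hmul q hC hCq ▸ hν.mono hC hB hCB
  have hup : ν B ≤ (q + 1) * (K / N) := by
    have hroom : (q + 1) * u - t ≤ μ.real Bᶜ := by
      rw [measureReal_compl hB]; linarith
    obtain ⟨D, hDB, hD, hDq⟩ := hμ hB.compl (by linarith) hroom
    have hBD : Disjoint B D := Set.disjoint_of_subset_right hDB disjoint_compl_right
    have := hmul (q + 1) (hB.union hD) (by rw [measureReal_union hBD hD, hDq]; push_cast; ring)
    push_cast at this
    exact this ▸ hν.mono hB (hB.union hD) Set.subset_union_left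
  have hK_eq : K * t / a = t / u * (K / N) := by rw [hu]; field_simp
  have htu : q ≤ t / u ∧ t / u ≤ q + 1 :=
    ⟨(le_div_iff₀ hu0).2 hqt, (div_le_iff₀ hu0).2 htq.le⟩
  rw [hK_eq, abs_sub_le_iff]
  constructor <;> nlinarith [htu.1, htu.2, div_nonneg hK0 hN0.le]

lemma eq_mul_measureReal_div (hν : IsDominatedContent μ ν) (hμ : HasIntermediateSubsets μ)
    (hK : ∀ ⦃B⦄, MeasurableSet B → μ.real B = a → ν B = K) (ha : 0 < a)
    (haμ : a < μ.real Set.univ) {B : Set α} (hB : MeasurableSet B) (hBa : μ.real B ≤ a) :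
    ν B = K * μ.real B / a := by
  have hN : ∀ᶠ N : ℕ in atTop, 0 < N ∧ a + a / N ≤ μ.real Set.univ := by
    have hlim : Tendsto (fun N : ℕ => a + a / N) atTop (𝓝 (a + 0)) :=
      tendsto_const_nhds.add (tendsto_const_div_atTop_nhds_zero_nat a)
    exact (eventually_gt_atTop 0).and ((hlim.eventually (gt_mem_nhds (by simpa using haμ))).mono
      fun _ h => h.le)
  have hlim : Tendsto (fun N : ℕ => K / N) atTop (𝓝 0) := tendsto_const_div_atTop_nhds_zero_nat K
  have := ge_of_tendsto hlim (hN.mono fun N hN => hν.abs_sub_le_div hμ hK ha hN.1 hN.2 hB hBa)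
  exact sub_eq_zero.1 (abs_nonpos_iff.1 this)

end IsDominatedContent

end Content

lemma hasIntermediateSubsets_volume_restrict {X : Set ℝ} (hX : MeasurableSet X)
    (hX1 : X ⊆ Set.Icc 0 1) : HasIntermediateSubsets (volume.restrict X) := by
  intro S hS r hr0 hrS
  rw [measureReal_restrict_apply hS] at hrS
  obtain ⟨C, hCS, hC, hCr⟩ :=
    exists_subset_measureReal_eq (hS.inter hX) (Set.inter_subset_right.trans hX1) hr0 hrS
  refine ⟨C, hCS.trans Set.inter_subset_left, hC, ?_⟩
  rwa [measureReal_restrict_apply hC, Set.inter_eq_left.2 (hCS.trans Set.inter_subset_right)]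

lemma Set.univ_pi_update_union {ι : Type*} [DecidableEq ι] {β : Type*} (A : ι → Set β) (k : ι)
    (B C : Set β) :
    Set.univ.pi (Function.update A k (B ∪ C)) =
      Set.univ.pi (Function.update A k B) ∪ Set.univ.pi (Function.update A k C) := by
  simp only [Set.univ_pi_update k A _ fun _ s => s, Set.mem_union, Set.ofPred_or,
    Set.union_inter_distrib_right]

lemma volume_setOf_apply_eq_apply {ι : Type*} [Fintype ι] [DecidableEq ι] {i j : ι} (hij : i ≠ j) :
    volume {x : ι → ℝ | x i = x j} = 0 := by
  let L : (ι → ℝ) →ₗ[ℝ] ℝ := LinearMap.proj (R := ℝ) (φ := fun _ : ι => ℝ) i - LinearMap.proj j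
  have hL : {x : ι → ℝ | x i = x j} = LinearMap.ker L := by
    ext x; simp [L, sub_eq_zero]
  rw [hL]
  refine Measure.addHaar_submodule _ _ fun htop => ?_
  have := htop ▸ Submodule.mem_top (x := Pi.single i (1 : ℝ))
  simp [L, hij.symm] at this

lemma ae_injective {ι : Type*} [Fintype ι] [DecidableEq ι] :
    ∀ᵐ x : ι → ℝ, Function.Injective x := by
  have : ∀ i j, ∀ᵐ x : ι → ℝ, i ≠ j → x i ≠ x j := fun i j => by
    rcases eq_or_ne i j with rfl | hij
    · exact .of_forall fun _ h => absurd rfl h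
    · filter_upwards [measure_eq_zero_iff_ae_notMem.1 (volume_setOf_apply_eq_apply hij)]
        with x hx _ using hx
  filter_upwards [ae_all_iff.2 fun i => ae_all_iff.2 (this i)] with x hx i j
  exact not_imp_not.1 (hx i j)

lemma eventually_closedBall_subset_and_separated {ι : Type*} [Finite ι] {x : ι → ℝ}
    (hx : ∀ i, x i ∈ Set.Ioo 0 1) (hinj : Function.Injective x) :
    ∀ᶠ r in 𝓝[>] (0 : ℝ), (∀ i, Metric.closedBall (x i) r ⊆ Set.Icc 0 1) ∧
      Pairwise fun i j => 2 * r < dist (x i) (x j) := by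
  have h2r : Tendsto (fun r : ℝ => 2 * r) (𝓝[>] 0) (𝓝 0) :=
    tendsto_nhdsWithin_of_tendsto_nhds (by simpa using (continuous_const_mul (2 : ℝ)).tendsto 0)
  refine .and (eventually_all.2 fun i => ?_)
    (eventually_all.2 fun i => eventually_all.2 fun j => ?_)
  · exact eventually_nhdsWithin_of_eventually_nhds <| (eventually_closedBall_subset
      (Ioo_mem_nhds (hx i).1 (hx i).2)).mono fun _ h => h.trans Set.Ioo_subset_Icc_self
  · rcases eq_or_ne i j with rfl | hij
    · exact .of_forall fun _ h => absurd rfl h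
    · exact (h2r.eventually (gt_mem_nhds (dist_pos.2 (hinj.ne hij)))).mono fun _ h _ => h

section Graphon

variable {m : ℕ} {F : SimpleGraph (Fin m)} {W : ℝ → ℝ → ℝ}

lemma psi_mem_unitInterval (hW : IsGraphon W) (x : Fin m → ℝ) : psi F W x ∈ unitInterval :=
  unitInterval.prod_mem fun i _ => unitInterval.prod_mem fun j _ => by
    split_ifs
    exacts [hW.2.2 _ _, unitInterval.one_mem]

lemma measurable_psi (hW : IsGraphon W) : Measurable (psi F W) :=
  Finset.measurable_prod _ fun i _ => Finset.measurable_prod _ fun j _ =>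
    Measurable.ite (.const _) (hW.1.comp (f := fun x : Fin m → ℝ => (x i, x j)) (by fun_prop))
      measurable_const

lemma integrableOn_psi (hW : IsGraphon W) {s : Set (Fin m → ℝ)} (hs : volume s ≠ ∞) :
    IntegrableOn (psi F W) s :=
  Measure.integrableOn_of_bounded hs (measurable_psi hW).aestronglyMeasurable (M := 1) <|
    .of_forall fun x => by
      rw [Real.norm_eq_abs, abs_le]
      have := psi_mem_unitInterval (F := F) hW x
      exact ⟨by linarith [this.1], this.2⟩

lemma volume_univ_pi_update_le {A : Fin m → Set ℝ} (hA1 : ∀ i, A i ⊆ Set.Icc 0 1) (k : Fin m)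
    (B : Set ℝ) : volume (Set.univ.pi (Function.update A k B)) ≤ volume B := by
  rw [volume_pi_pi, ← Finset.mul_prod_erase _ _ (Finset.mem_univ k), Function.update_self]
  refine mul_le_of_le_one_right' (Finset.prod_le_one' fun i hi => ?_)
  rw [Function.update_of_ne (Finset.ne_of_mem_erase hi)]
  exact (measure_mono (hA1 i)).trans (by simp)

lemma isDominatedContent_setIntegral_psi (hW : IsGraphon W) {A : Fin m → Set ℝ}
    (hA : ∀ i, MeasurableSet (A i)) (hA1 : ∀ i, A i ⊆ Set.Icc 0 1) (k : Fin m) {X : Set ℝ}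
    (hX : MeasurableSet X) (hX1 : X ⊆ Set.Icc 0 1) :
    IsDominatedContent (volume.restrict X)
      fun B => ∫ x in Set.univ.pi (Function.update A k (B ∩ X)), psi F W x := by
  have hmeas : ∀ B, MeasurableSet B →
      MeasurableSet (Set.univ.pi (Function.update A k (B ∩ X))) := fun B hB =>
    MeasurableSet.univ_pi fun i => by
      rcases eq_or_ne i k with rfl | hi
      · simpa using hB.inter hX
      · simpa [Function.update_of_ne hi] using hA i
  have hfin : ∀ B, volume (Set.univ.pi (Function.update A k (B ∩ X))) ≠ ∞ := fun B =>
    ne_top_of_le_ne_top (volume_ne_top_of_subset_Icc (Set.inter_subset_right.trans hX1))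
      (volume_univ_pi_update_le hA1 k _)
  refine ⟨fun B C hB hC hBC => ?_, fun B hB => ?_, fun B hB => ?_⟩
  · rw [Set.union_inter_distrib_right, Set.univ_pi_update_union]
    refine setIntegral_union (Set.disjoint_univ_pi.2 ⟨k, ?_⟩) (hmeas C hC)
      (integrableOn_psi hW (hfin B)) (integrableOn_psi hW (hfin C))
    simpa using hBC.mono Set.inter_subset_left Set.inter_subset_left
  · exact setIntegral_nonneg (hmeas B hB) fun x _ => (psi_mem_unitInterval hW x).1
  · calc (∫ x in Set.univ.pi (Function.update A k (B ∩ X)), psi F W x)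
        ≤ ∫ _ in Set.univ.pi (Function.update A k (B ∩ X)), (1 : ℝ) :=
          setIntegral_mono (integrableOn_psi hW (hfin B)) (integrableOn_const (hfin B))
            fun x => (psi_mem_unitInterval hW x).2
      _ ≤ (volume.restrict X).real B := by
          rw [setIntegral_const, smul_eq_mul, mul_one, measureReal_restrict_apply hB]
          exact ENNReal.toReal_mono (volume_ne_top_of_subset_Icc
            (Set.inter_subset_right.trans hX1)) (volume_univ_pi_update_le hA1 k _)

lemma one_sub_sum_le_measureReal_Icc_sdiff {ι : Type*} (s : Finset ι) {A : ι → Set ℝ}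
    (hA1 : ∀ i, A i ⊆ Set.Icc 0 1) :
    1 - ∑ i ∈ s, volume.real (A i) ≤ volume.real (Set.Icc 0 1 \ ⋃ i ∈ s, A i) := by
  have := le_measureReal_sdiff (μ := volume) (s₁ := Set.Icc (0 : ℝ) 1) (s₂ := ⋃ i ∈ s, A i)
    (volume_ne_top_of_subset_Icc (Set.iUnion₂_subset fun i _ => hA1 i))
  rw [Real.volume_real_Icc_of_le zero_le_one] at this
  linarith [measureReal_biUnion_finset_le (μ := volume) s A]

lemma GraphonP.setIntegral_update_eq {p : ℝ} {τ : Fin m → ℝ} (hP : GraphonP F W p τ)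
    {A : Fin m → Set ℝ} (hA : ∀ i, MeasurableSet (A i)) (hA1 : ∀ i, A i ⊆ Set.Icc 0 1)
    (hdisj : Pairwise fun i j => Disjoint (A i) (A j)) {k : Fin m}
    (hAτ : ∀ i ≠ k, volume (A i) = ENNReal.ofReal (τ i)) {B : Set ℝ} (hB : MeasurableSet B)
    (hB1 : B ⊆ Set.Icc 0 1) (hBA : ∀ i ≠ k, Disjoint B (A i))
    (hBτ : volume B = ENNReal.ofReal (τ k)) :
    ∫ x in Set.univ.pi (Function.update A k B), psi F W x = p ^ numEdges F * ∏ i, τ i := by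
  refine hP _ (fun i => ?_) (fun i => ?_) (fun i j hij => ?_) (fun i => ?_)
  all_goals rcases eq_or_ne i k with rfl | hi
  · simpa using hB
  · simpa [Function.update_of_ne hi] using hA i
  · simpa using hB1
  · simpa [Function.update_of_ne hi] using hA1 i
  · simpa [Function.update_of_ne hij.symm] using hBA j hij.symm
  · rcases eq_or_ne j k with rfl | hj
    · simpa [Function.update_of_ne hi] using (hBA i hi).symm
    · simpa [Function.update_of_ne hi, Function.update_of_ne hj] using hdisj hij
  · simpa using hBτ
  · simpa [Function.update_of_ne hi] using hAτ i hi

theorem GraphonP.update (hW : IsGraphon W) {p : ℝ} {τ : Fin m → ℝ} (hτ0 : ∀ i, 0 ≤ τ i)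
    (hτ1 : ∑ i, τ i < 1) (hP : GraphonP F W p τ) {k : Fin m} (hk : 0 < τ k) {t : ℝ}
    (ht0 : 0 ≤ t) (htk : t ≤ τ k) : GraphonP F W p (Function.update τ k t) := by
  intro A hA hA1 hdisj hAτ
  have hAτ' : ∀ i, volume.real (A i) = Function.update τ k t i := fun i => by
    rw [measureReal_def, hAτ, ENNReal.toReal_ofReal]
    rcases eq_or_ne i k with rfl | hi
    · simpa using ht0
    · simpa [Function.update_of_ne hi] using hτ0 i
  set X := Set.Icc 0 1 \ ⋃ i ∈ Finset.univ.erase k, A i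
  have hX : MeasurableSet X :=
    measurableSet_Icc.diff (Finset.measurableSet_biUnion _ fun i _ => hA i)
  have hX1 : X ⊆ Set.Icc 0 1 := Set.sdiff_subset
  have hXA : ∀ i ≠ k, Disjoint X (A i) := fun i hi => Set.disjoint_sdiff_left.mono_right
    (Set.subset_biUnion_of_mem (Finset.mem_erase.2 ⟨hi, Finset.mem_univ i⟩))
  have hAkX : A k ⊆ X := fun x hx => ⟨hA1 k hx, by
    simpa using fun i hi hxi => Set.disjoint_left.1 (hdisj hi) hxi hx⟩
  have hXτ : τ k < volume.real X := by
    have := one_sub_sum_le_measureReal_Icc_sdiff (Finset.univ.erase k) hA1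
    rw [Finset.sum_congr rfl fun i hi => by
      rw [hAτ', Function.update_of_ne (Finset.ne_of_mem_erase hi)]] at this
    linarith [Finset.add_sum_erase _ τ (Finset.mem_univ k)]
  have : IsFiniteMeasure (volume.restrict X) :=
    isFiniteMeasure_restrict.2 (volume_ne_top_of_subset_Icc hX1)
  have hK : ∀ ⦃B⦄, MeasurableSet B → (volume.restrict X).real B = τ k →
      ∫ x in Set.univ.pi (Function.update A k (B ∩ X)), psi F W x =
        p ^ numEdges F * ∏ i, τ i := fun B hB hBτ =>
    hP.setIntegral_update_eq hA hA1 hdisj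
      (fun i hi => by simpa [Function.update_of_ne hi] using hAτ i) (hB.inter hX)
      (Set.inter_subset_right.trans hX1) (fun i hi => (hXA i hi).mono_left Set.inter_subset_right)
      (by rw [← hBτ, measureReal_restrict_apply hB, ofReal_measureReal
        (volume_ne_top_of_subset_Icc (Set.inter_subset_right.trans hX1))])
  have hlin := (isDominatedContent_setIntegral_psi hW hA hA1 k hX hX1).eq_mul_measureReal_div
    (hasIntermediateSubsets_volume_restrict hX hX1) hK hk
    (by rwa [measureReal_restrict_apply_univ]) (hA k) (by
      rw [measureReal_restrict_apply (hA k), Set.inter_eq_left.2 hAkX, hAτ']; simpa using htk)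
  rw [Set.inter_eq_left.2 hAkX, Function.update_eq_self, measureReal_restrict_apply (hA k),
    Set.inter_eq_left.2 hAkX, hAτ'] at hlin
  rw [hlin, Finset.prod_update_of_mem (Finset.mem_univ k), Finset.sdiff_singleton_eq_erase,
    ← Finset.mul_prod_erase _ _ (Finset.mem_univ k), Function.update_self]
  field_simp

theorem GraphonP.of_le (hW : IsGraphon W) {p : ℝ} {α τ : Fin m → ℝ} (hα : ∀ i, 0 < α i)
    (hα1 : ∑ i, α i < 1) (hP : GraphonP F W p α) (hτ0 : ∀ i, 0 ≤ τ i) (hτα : ∀ i, τ i ≤ α i) :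
    GraphonP F W p τ := by
  suffices ∀ (S : Finset (Fin m)) (τ : Fin m → ℝ), (∀ i, 0 ≤ τ i) → (∀ i, τ i ≤ α i) →
      (∀ i ∉ S, τ i = α i) → GraphonP F W p τ from
    this Finset.univ τ hτ0 hτα fun i hi => absurd (Finset.mem_univ i) hi
  intro S
  induction S using Finset.induction_on with
  | empty => exact fun τ _ _ hτ => funext (fun i => hτ i (Finset.notMem_empty i)) ▸ hP
  | insert k S hkS ih =>
    intro τ hτ0 hτα hτ
    have hσ0 : ∀ i, 0 ≤ Function.update τ k (α k) i := fun i => by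
      rcases eq_or_ne i k with rfl | hi
      exacts [by simpa using (hα i).le, by simpa [Function.update_of_ne hi] using hτ0 i]
    have hσα : ∀ i, Function.update τ k (α k) i ≤ α i := fun i => by
      rcases eq_or_ne i k with rfl | hi
      exacts [by simp, by simpa [Function.update_of_ne hi] using hτα i]
    have hσ : GraphonP F W p (Function.update τ k (α k)) := ih _ hσ0 hσα fun i hi => by
      rcases eq_or_ne i k with rfl | hik
      exacts [by simp, by simpa [Function.update_of_ne hik] using hτ i (by simp [hik, hi])]
    have := hσ.update hW hσ0 ((Finset.sum_le_sum fun i _ => hσα i).trans_lt hα1)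
      (k := k) (by simpa using hα k) (hτ0 k) (by simpa using hτα k)
    rwa [Function.update_idem, Function.update_eq_self] at this

lemma GraphonP.setAverage_closedBall {p r : ℝ} (hP : GraphonP F W p fun _ => 2 * r)
    (hr : 0 < r) {x : Fin m → ℝ} (hx : ∀ i, Metric.closedBall (x i) r ⊆ Set.Icc 0 1)
    (hsep : Pairwise fun i j => 2 * r < dist (x i) (x j)) :
    ⨍ y in Metric.closedBall x r, psi F W y = p ^ numEdges F := by
  have hvol : volume.real (Metric.closedBall x r) = ∏ _i : Fin m, 2 * r := by
    simp [measureReal_def, closedBall_pi x hr.le, volume_pi_pi, Real.volume_closedBall, hr.le]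
  rw [setAverage_eq, hvol, closedBall_pi x hr.le, hP _ (fun _ => measurableSet_closedBall) hx
    (fun i j hij => Metric.closedBall_disjoint_closedBall (by linarith [hsep hij]))
    (fun _ => Real.volume_closedBall _ _), smul_eq_mul]
  field_simp

/-- Lebesgue differentiation over the cubes `closedBall x r` of the sup metric: at a.e. point
of the open cube with distinct coordinates, small cubes are products of disjoint intervals. -/
theorem GraphonP.psi_ae_eq (hW : IsGraphon W) {p : ℝ}
    (hP : ∀ᶠ r in 𝓝[>] (0 : ℝ), GraphonP F W p fun _ => 2 * r) :
    psi F W =ᵐ[volume.restrict (unitBox m)] fun _ => p ^ numEdges F := by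
  have hloc : LocallyIntegrable (psi F W) volume := fun x =>
    ⟨Metric.ball x 1, Metric.ball_mem_nhds x one_pos, integrableOn_psi hW measure_ball_lt_top.ne⟩
  have hbox : unitBox m =ᵐ[volume] Set.univ.pi fun _ => Set.Ioo (0 : ℝ) 1 := by
    rw [unitBox, Set.pi_univ_Icc]
    exact Measure.univ_pi_Ioo_ae_eq_Icc.symm
  rw [EventuallyEq, Measure.restrict_congr_set hbox,
    ae_restrict_iff' (MeasurableSet.univ_pi fun _ => measurableSet_Ioo)]
  filter_upwards [(Besicovitch.vitaliFamily volume).ae_tendsto_average hloc, ae_injective]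
    with x hx hinj hx01
  refine tendsto_nhds_unique (hx.comp (Besicovitch.tendsto_filterAt volume x))
    (tendsto_const_nhds.congr' ?_)
  filter_upwards [hP, self_mem_nhdsWithin,
    eventually_closedBall_subset_and_separated (fun i => hx01 i (Set.mem_univ i)) hinj]
    with r hPr hr hsmall using (hPr.setAverage_closedBall hr hsmall.1 hsmall.2).symm

end Graphon

theorem stmt11_general {m : ℕ} (F : SimpleGraph (Fin m)) (W : ℝ → ℝ → ℝ)
    (hW : IsGraphon W) (p : ℝ)
    (α : Fin m → ℝ) (hα : ∀ i, α i ∈ Set.Ioo (0 : ℝ) 1) (hsum : ∑ i, α i < 1) :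
    GraphonP F W p α ↔
      psi F W =ᵐ[volume.restrict (unitBox m)] fun _ => p ^ numEdges F := by
  constructor
  · intro hP
    refine GraphonP.psi_ae_eq hW ?_
    have hsmall : ∀ᶠ r in 𝓝[>] (0 : ℝ), ∀ i, r ≤ α i / 2 := eventually_all.2 fun i =>
      eventually_nhdsWithin_of_eventually_nhds (eventually_le_nhds (half_pos (hα i).1))
    filter_upwards [self_mem_nhdsWithin, hsmall] with r (hr : 0 < r) hrα
    exact hP.of_le hW (fun i => (hα i).1) hsum (fun _ => by positivity)
      fun i => by linarith [hrα i]
  · intro hψ A _ hA1 _ hAα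
    have hvol : volume.real (Set.univ.pi A) = ∏ i, α i := by
      simp [measureReal_def, volume_pi_pi, hAα, fun i => (hα i).1.le]
    rw [integral_congr_ae (g := fun _ => p ^ numEdges F) ?_, setIntegral_const, hvol,
      smul_eq_mul, mul_comm]
    exact ae_restrict_of_ae_restrict_of_subset (Set.pi_mono fun i _ => hA1 i) hψ

/-- **Lemma (LW3).** If `∑ α_i < 1`, then `P^W(F;α₁,…,α_m)` holds iff
`Ψ_{F,W} = p^(e F)` a.e. on `[0,1]^m`. -/
theorem stmt11 {m : ℕ} (F : SimpleGraph (Fin m)) (W : ℝ → ℝ → ℝ)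
    (hW : IsGraphon W) (p : ℝ) (hp0 : 0 ≤ p) (hp1 : p ≤ 1)
    (α : Fin m → ℝ) (hα : ∀ i, α i ∈ Set.Ioo (0 : ℝ) 1) (hsum : ∑ i, α i < 1) :
    GraphonP F W p α ↔
      psi F W =ᵐ[volume.restrict (unitBox m)] fun _ => p ^ numEdges F :=
  stmt11_general F W hW p α hα hsum
end

section
/- Let m ≥ 2, let Φ : [0,1]^{m(m−1)/2} → ℝ be a continuous function of the variables w_{ij}, 1 ≤ i < j ≤ m, and let a ∈ ℝ. The following are equivalent: (i) there exists a graphon W, not a.e. constant, such that Φ_W(x_1,…,x_m) = a for a.e. (x_1,…,x_m) ∈ [0,1]^m; (ii) there exists a non-constant graphon W that is constant on each of the three regions [0,1/2]², (1/2,1]², and ([0,1/2]×(1/2,1]) ∪ ((1/2,1]×[0,1/2]), such that Φ_W(x_1,…,x_m) = a for all (x_1,…,x_m); (iii) there exist u, v, s ∈ [0,1], not all equal, such that for every subset A ⊆ {1,…,m}, setting w_{ij} := u if i,j ∈ A, w_{ij} := v if i,j ∉ A, and w_{ij} := s otherwise, one has Φ((w_{ij})_{i<j}) = a. -/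
open Filter Finset Asymptotics MeasureTheory

/-!
(iii) ⇒ (i), (ii): the two-step graphon with values `u`, `v`, `s` evaluates at every point `x` to
the pattern of `A = {i | x i > 1/2}`. (ii) ⇒ (iii): evaluate at points with coordinates in
`{0, 1}`.

(i) ⇒ (iii): since `W` is not a.e. constant, `W ≤ q` and `W ≥ q + ρ` on sets `D_L`, `D_H` of
positive measure, for some `q` and `ρ > 0`. Take four blocks of `N` independent uniform points.
With positive probability all cross values between blocks 0 and 1 lie in `D_L` and all those
between blocks 2 and 3 lie in `D_H`, while almost surely `Φ_W = a` at every injective choice of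
`m` of the points. Fix such a configuration and colour pairs of indices by the `ε`-grid cells of
the values of `W` between the blocks; Ramsey's theorem gives `2m` indices on which these cells
depend only on the blocks. For some two blocks `X`, `Y` the values within `X`, within `Y` and
across are not all close (otherwise low and high values would be close), and taking points of
block `X` for `i ∈ A` and of block `Y` otherwise solves (iii) up to `ε`. Compactness and the
continuity of `Φ` let `ε → 0`.
-/

open Topology

section Ramsey

variable {C : Type*} [Fintype C] [Nonempty C]

theorem exists_strictMono_color_eq_of_lt (L : ℕ) :
    ∃ N : ℕ, ∀ (α : Type) [LinearOrder α] (S : Finset α), N ≤ #S → ∀ χ : α → α → C,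
      ∃ g : Fin L → α, StrictMono g ∧ (∀ i, g i ∈ S) ∧
        ∃ c : Fin L → C, ∀ i j, i < j → χ (g i) (g j) = c i := by
  classical
  induction L with
  | zero => exact ⟨0, fun _ _ _ _ _ => ⟨Fin.elim0, fun i => i.elim0, fun i => i.elim0,
      Fin.elim0, fun i => i.elim0⟩⟩
  | succ L ih =>
    obtain ⟨N, hN⟩ := ih
    refine ⟨Fintype.card C * N + 1, fun α _ S hS χ => ?_⟩
    have hSne : S.Nonempty := Finset.card_pos.1 (by omega)
    set v := S.min' hSne
    obtain ⟨c₀, -, hc₀⟩ := Finset.exists_le_card_fiber_of_mul_le_card_of_maps_to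
      (s := S.erase v) (f := χ v) (t := Finset.univ) (n := N) (fun _ _ => Finset.mem_univ _)
      Finset.univ_nonempty
      (by rw [Finset.card_univ, Finset.card_erase_of_mem (S.min'_mem hSne)]; omega)
    obtain ⟨g, hg, hgS, c, hc⟩ := hN α _ hc₀ χ
    have hgS' : ∀ i, g i ∈ S ∧ v < g i ∧ χ v (g i) = c₀ := fun i => by
      obtain ⟨hne, hmem⟩ := Finset.mem_erase.1 (Finset.mem_filter.1 (hgS i)).1
      exact ⟨hmem, lt_of_le_of_ne (S.min'_le _ hmem) (Ne.symm hne),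
        (Finset.mem_filter.1 (hgS i)).2⟩
    refine ⟨Fin.cons v g, Fin.strictMono_cons.2 ⟨fun i => (hgS' i).2.1, hg⟩, ?_,
      Fin.cons c₀ c, ?_⟩
    · exact Fin.cases (S.min'_mem hSne) fun i => (hgS' i).1
    · intro i j hij
      cases j using Fin.cases with
      | zero => exact absurd hij (Fin.not_lt_zero _)
      | succ j =>
        cases i using Fin.cases with
        | zero => exact (hgS' j).2.2
        | succ i => exact hc i j (Fin.succ_lt_succ_iff.1 hij)

theorem exists_strictMono_monochromatic (L : ℕ) :
    ∃ N : ℕ, ∀ (α : Type) [LinearOrder α] (S : Finset α), N ≤ #S → ∀ χ : α → α → C,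
      ∃ g : Fin L → α, StrictMono g ∧ (∀ i, g i ∈ S) ∧
        ∃ c : C, ∀ i j, i < j → χ (g i) (g j) = c := by
  classical
  obtain ⟨N, hN⟩ := exists_strictMono_color_eq_of_lt (C := C) (Fintype.card C * L)
  refine ⟨N, fun α _ S hS χ => ?_⟩
  obtain ⟨g, hg, hgS, c, hc⟩ := hN α S hS χ
  obtain ⟨c₀, hc₀⟩ := Fintype.exists_le_card_fiber_of_mul_le_card (f := c) (n := L) (by simp)
  obtain ⟨I, hIsub, hIcard⟩ := Finset.exists_subset_card_eq hc₀
  let e := I.orderEmbOfFin hIcard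
  refine ⟨g ∘ e, hg.comp e.strictMono, fun i => hgS _, c₀, fun i j hij => ?_⟩
  rw [Function.comp_apply, Function.comp_apply, hc _ _ (e.strictMono hij)]
  exact (Finset.mem_filter.1 (hIsub (I.orderEmbOfFin_mem hIcard i))).2

end Ramsey

section ProductMeasure

variable {α β : Type*} [MeasurableSpace α] [MeasurableSpace β] {μ : Measure α} {ν : Measure β}

theorem measurePreserving_comp_of_injective [IsProbabilityMeasure μ] {ι κ : Type*} [Fintype ι]
    [Fintype κ] {f : ι → κ} (hf : Function.Injective f) :
    MeasurePreserving (fun x : κ → α => x ∘ f) (Measure.pi fun _ => μ) (Measure.pi fun _ => μ) := by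
  classical
  let e : ι ⊕ {k // k ∉ Set.range f} ≃ κ :=
    ((Equiv.ofInjective f hf).sumCongr (Equiv.refl _)).trans (Equiv.sumCompl (· ∈ Set.range f))
  convert (measurePreserving_fst (μ := Measure.pi fun _ : ι => μ)
    (ν := Measure.pi fun _ : {k // k ∉ Set.range f} => μ)).comp
    ((measurePreserving_sumPiEquivProdPi (fun _ => μ)).comp
      (measurePreserving_piCongrLeft (fun _ : κ => μ) e).symm) using 1
  funext x i
  rfl

theorem ae_forall_comp_of_injective [IsProbabilityMeasure μ] {ι κ : Type*} [Fintype ι]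
    [Fintype κ] {p : (ι → α) → Prop} (hp : ∀ᵐ x ∂Measure.pi fun _ => μ, p x) :
    ∀ᵐ ω ∂Measure.pi fun _ : κ => μ, ∀ σ : ι → κ, Function.Injective σ → p (ω ∘ σ) := by
  classical
  refine Filter.eventually_all.2 fun σ => ?_
  by_cases hσ : Function.Injective σ
  · filter_upwards [(measurePreserving_comp_of_injective hσ).quasiMeasurePreserving.ae hp]
      with ω hω using fun _ => hω
  · exact .of_forall fun _ h => absurd h hσ

theorem measurableSet_setOf_forall_apply_mem {ι : Type*} [Countable ι] {D : Set (α × β)}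
    (hD : MeasurableSet D) : MeasurableSet {p : (ι → α) × β | ∀ i, (p.1 i, p.2) ∈ D} := by
  simp only [Set.ofPred_forall]
  exact .iInter fun i => hD.preimage (by fun_prop)

theorem measure_setOf_forall_mem_ne_zero [SigmaFinite μ] [SFinite ν] {D : Set (α × β)}
    (hD : MeasurableSet D) (h : μ.prod ν D ≠ 0) (ι : Type*) [Fintype ι] :
    ((Measure.pi fun _ : ι => μ).prod ν) {p | ∀ i, (p.1 i, p.2) ∈ D} ≠ 0 := by
  have hsection : ∀ y, (Measure.pi fun _ : ι => μ) ((fun x => (x, y)) ⁻¹'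
      {p : (ι → α) × β | ∀ i, (p.1 i, p.2) ∈ D}) =
      μ ((fun x => (x, y)) ⁻¹' D) ^ Fintype.card ι := by
    intro y
    rw [← Finset.card_univ, ← Finset.prod_const, ← Measure.pi_pi]
    congr 1
    ext x
    simp
  rw [Measure.prod_apply_symm hD] at h
  rw [Measure.prod_apply_symm (measurableSet_setOf_forall_apply_mem hD), funext hsection]
  intro h0
  rw [lintegral_eq_zero_iff ((measurable_measure_prodMk_right hD).pow_const _)] at h0
  refine h ((lintegral_eq_zero_iff (measurable_measure_prodMk_right hD)).2 ?_)
  filter_upwards [h0] with y hy using (pow_eq_zero_iff'.1 hy).1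

theorem measure_setOf_forall_forall_mem_ne_zero [SigmaFinite μ] [SigmaFinite ν]
    {D : Set (α × β)} (hD : MeasurableSet D) (h : μ.prod ν D ≠ 0) (ι κ : Type*) [Fintype ι]
    [Fintype κ] :
    ((Measure.pi fun _ : ι => μ).prod (Measure.pi fun _ : κ => ν))
      {p | ∀ i j, (p.1 i, p.2 j) ∈ D} ≠ 0 := by
  have hD₁ := measurableSet_setOf_forall_apply_mem (ι := ι) hD
  have h₁ := measure_setOf_forall_mem_ne_zero hD h ι
  rw [← Measure.measurePreserving_swap.measure_preimage hD₁.nullMeasurableSet] at h₁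
  have h₂ := measure_setOf_forall_mem_ne_zero (hD₁.preimage measurable_swap) h₁ κ
  rw [← Measure.measurePreserving_swap.measure_preimage_equiv (f := MeasurableEquiv.prodComm)]
    at h₂
  convert h₂ using 2
  exact Set.ext fun p => forall_comm

theorem measurableSet_setOf_forall_inl_inr_mem {ι κ : Type*} [Countable ι] [Countable κ]
    {D : Set (α × α)} (hD : MeasurableSet D) :
    MeasurableSet {x : ι ⊕ κ → α | ∀ i j, (x (.inl i), x (.inr j)) ∈ D} := by
  simp only [Set.ofPred_forall]
  exact .iInter fun i => .iInter fun j => hD.preimage (by fun_prop)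

theorem measure_setOf_forall_inl_inr_mem_ne_zero [SigmaFinite μ] {D : Set (α × α)}
    (hD : MeasurableSet D) (h : μ.prod μ D ≠ 0) (ι κ : Type*) [Fintype ι] [Fintype κ] :
    (Measure.pi fun _ : ι ⊕ κ => μ) {x | ∀ i j, (x (.inl i), x (.inr j)) ∈ D} ≠ 0 := by
  have h' := measure_setOf_forall_forall_mem_ne_zero hD h ι κ
  rw [← (measurePreserving_sumPiEquivProdPi fun _ => μ).measure_preimage_equiv] at h'
  exact h'

theorem measure_setOf_blocks_cross_mem_ne_zero [IsProbabilityMeasure μ] {DL DH : Set (α × α)}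
    (hL : MeasurableSet DL) (hH : MeasurableSet DH) (hL0 : μ.prod μ DL ≠ 0)
    (hH0 : μ.prod μ DH ≠ 0) (ι : Type*) [Fintype ι] :
    (Measure.pi fun _ : Fin 4 × ι => μ)
      {ω | (∀ i j, (ω (0, i), ω (1, j)) ∈ DL) ∧ ∀ i j, (ω (2, i), ω (3, j)) ∈ DH} ≠ 0 := by
  let tag : (ι ⊕ ι) ⊕ (ι ⊕ ι) → Fin 4 × ι :=
    Sum.elim (Sum.elim ((0, ·)) ((1, ·))) (Sum.elim ((2, ·)) ((3, ·)))
  have htag : Function.Injective tag := by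
    rintro ((i | i) | (i | i)) ((j | j) | (j | j)) h <;> simp_all [tag]
  let e := MeasurableEquiv.sumPiEquivProdPi fun _ : (ι ⊕ ι) ⊕ (ι ⊕ ι) => α
  have hB₀ : MeasurableSet (e ⁻¹' ({x | ∀ i j, (x (.inl i), x (.inr j)) ∈ DL} ×ˢ
      {x | ∀ i j, (x (.inl i), x (.inr j)) ∈ DH})) :=
    e.measurable ((measurableSet_setOf_forall_inl_inr_mem hL).prod
      (measurableSet_setOf_forall_inl_inr_mem hH))
  have h := (measurePreserving_comp_of_injective (μ := μ) htag).measure_preimage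
    hB₀.nullMeasurableSet
  rw [(measurePreserving_sumPiEquivProdPi fun _ => μ).measure_preimage_equiv,
    Measure.prod_prod] at h
  exact ne_of_eq_of_ne h (mul_ne_zero (measure_setOf_forall_inl_inr_mem_ne_zero hL hL0 ι ι)
    (measure_setOf_forall_inl_inr_mem_ne_zero hH hH0 ι ι))

end ProductMeasure

theorem exists_measure_le_ne_zero_and_measure_add_le_ne_zero {Ω : Type*} [MeasurableSpace Ω]
    {μ : Measure Ω} {f : Ω → ℝ} (hf : ¬ ∃ c, f =ᵐ[μ] fun _ => c) :
    ∃ q ρ : ℝ, 0 < ρ ∧ μ {x | f x ≤ q} ≠ 0 ∧ μ {x | q + ρ ≤ f x} ≠ 0 := by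
  by_contra! h
  refine hf (Filter.exists_eventuallyEq_const_of_forall_separating
    (· ∈ Set.range (Set.Iic : ℝ → Set ℝ)) ?_)
  rintro _ ⟨q, rfl⟩
  by_cases hq : μ {x | f x ≤ q} = 0
  · exact .inr (measure_eq_zero_iff_ae_notMem.1 hq)
  refine .inl (ae_iff.2 (measure_mono_null (fun x (hx : ¬ f x ≤ q) => ?_)
    (measure_iUnion_null fun n : ℕ => h q (1 / (n + 1)) Nat.one_div_pos_of_nat hq)))
  obtain ⟨n, hn⟩ := exists_nat_one_div_lt (sub_pos.2 (not_le.1 hx))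
  exact Set.mem_iUnion.2 ⟨n, by simp only [Set.mem_ofPred_eq]; linarith⟩

theorem eq_of_ae_restrict_eq_const {α β : Type*} [MeasurableSpace α] {μ : Measure α}
    {R S : Set α} {f : α → β} {c t : β} (hRS : R ⊆ S) (hR : μ R ≠ 0) (hf : ∀ z ∈ R, f z = t)
    (hc : f =ᵐ[μ.restrict S] fun _ => c) : t = c := by
  obtain ⟨z, hz, hzc⟩ := Measure.exists_mem_of_measure_ne_zero_of_ae hR
    (ae_restrict_of_ae_restrict_of_subset hRS hc)
  exact (hf z hz).symm.trans hzc

theorem exists_forall_eq_of_forall_approx {X Y Z ι : Type*} [TopologicalSpace X]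
    [FirstCountableTopology X] [PseudoMetricSpace Y] [TopologicalSpace Z] [T2Space Z]
    {K : Set X} (hK : IsCompact K) {S : Set Y} {Φ : Y → Z} (hΦ : ContinuousOn Φ S)
    {P : ι → X → Y} (hP : ∀ i, Continuous (P i)) (hPS : ∀ i, ∀ x ∈ K, P i x ∈ S) {a : Z}
    (h : ∀ ε > 0, ∃ x ∈ K, ∀ i, ∃ y ∈ S, Φ y = a ∧ dist y (P i x) < ε) :
    ∃ x ∈ K, ∀ i, Φ (P i x) = a := by
  choose x hxK hy using fun n : ℕ => h (1 / (n + 1)) Nat.one_div_pos_of_nat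
  obtain ⟨x₀, hx₀, φ, hφ, hlim⟩ := hK.tendsto_subseq hxK
  refine ⟨x₀, hx₀, fun i => ?_⟩
  choose y hyS hya hyd using fun n => hy n i
  have hy_lim : Tendsto (fun n => y (φ n)) atTop (nhds (P i x₀)) :=
    ((hP i).continuousAt.tendsto.comp hlim).congr_dist <|
      squeeze_zero (fun _ => dist_nonneg) (fun n => (dist_comm _ _).trans_le (hyd (φ n)).le)
        (tendsto_one_div_add_atTop_nhds_zero_nat.comp hφ.tendsto_atTop)
  refine tendsto_nhds_unique ((hΦ _ (hPS i x₀ hx₀)).tendsto.comp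
    (tendsto_nhdsWithin_iff.2 ⟨hy_lim, .of_forall fun n => hyS _⟩)) ?_
  simp only [Function.comp_def, hya, tendsto_const_nhds]

/-- The cell `[kε, (k+1)ε)` containing `x`, capped at `k = ⌊ε⁻¹⌋₊` to have finitely many
colours; the cap is not reached on `[0, 1]`. -/
noncomputable def gridCell (ε x : ℝ) : Fin (⌊ε⁻¹⌋₊ + 1) := Fin.clamp ⌊x / ε⌋₊ ⌊ε⁻¹⌋₊

theorem abs_sub_lt_of_gridCell_eq {ε x y : ℝ} (hε : 0 < ε) (hx : x ∈ Set.Icc 0 1)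
    (hy : y ∈ Set.Icc 0 1) (h : gridCell ε x = gridCell ε y) : |x - y| < ε := by
  have hcell : ∀ z ∈ Set.Icc (0 : ℝ) 1, (gridCell ε z : ℕ) = ⌊z / ε⌋₊ := fun z hz =>
    min_eq_left (Nat.floor_le_floor (by rw [div_eq_mul_inv]; nlinarith [hz.2, inv_pos.2 hε]))
  have hfloor := congrArg Fin.val h
  rw [hcell x hx, hcell y hy] at hfloor
  have hx₁ := Nat.floor_le (div_nonneg hx.1 hε.le)
  have hx₂ := Nat.lt_floor_add_one (x / ε)
  have hy₁ := Nat.floor_le (div_nonneg hy.1 hε.le)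
  have hy₂ := Nat.lt_floor_add_one (y / ε)
  rw [hfloor] at hx₁ hx₂
  rw [← abs_of_pos hε, ← div_lt_one (abs_pos.2 hε.ne'), ← abs_div, sub_div, abs_sub_lt_iff]
  constructor <;> linarith

/-- `Φ (edgeValues W x)` is `Φ_W(x)`. -/
def edgeValues {m : ℕ} (W : ℝ → ℝ → ℝ) (x : Fin m → ℝ) :
    {q : Fin m × Fin m // q.1 < q.2} → ℝ :=
  fun q => W (x q.1.1) (x q.1.2)

/-- The values `w_{ij}` of (iii). -/
def blockPattern {m : ℕ} (A : Finset (Fin m)) (u v s : ℝ) :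
    {q : Fin m × Fin m // q.1 < q.2} → ℝ :=
  fun q => if q.1.1 ∈ A then (if q.1.2 ∈ A then u else s) else (if q.1.2 ∈ A then s else v)

theorem exists_injective_abs_edgeValues_sub_blockPattern_lt {T : Type*} {m : ℕ}
    {W : ℝ → ℝ → ℝ} (hW : ∀ x y, W x y = W y x) {ε : ℝ} {ω : T × Fin (m + m) → ℝ}
    (hω : ∀ X Y i j i' j', i < j → i' < j' →
      |W (ω (X, i)) (ω (Y, j)) - W (ω (X, i')) (ω (Y, j'))| < ε)
    (X Y : T) {i₀ i₁ : Fin (m + m)} (h₀₁ : i₀ < i₁) (A : Finset (Fin m)) :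
    ∃ σ : Fin m → T × Fin (m + m), Function.Injective σ ∧ ∀ q,
      |edgeValues W (ω ∘ σ) q - blockPattern A (W (ω (X, i₀)) (ω (X, i₁)))
        (W (ω (Y, i₀)) (ω (Y, i₁))) (W (ω (X, i₀)) (ω (Y, i₁))) q| < ε := by
  classical
  have hlt : ∀ i j : Fin m, Fin.castAdd m i < Fin.natAdd m j := fun i j => by
    simp only [Fin.lt_def, Fin.val_castAdd, Fin.val_natAdd]; omega
  -- Points for `A` come from block `X` with indices in the first half, the others from block `Y`
  -- in the second half, so in every cross pair the `X`-point has the smaller index, as in `hω`.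
  refine ⟨fun i => if i ∈ A then (X, Fin.castAdd m i) else (Y, Fin.natAdd m i), ?_, ?_⟩
  · intro i j h
    by_cases hi : i ∈ A <;> by_cases hj : j ∈ A <;>
      simp only [hi, hj, if_true, if_false, Prod.mk.injEq] at h
    · exact Fin.castAdd_injective _ _ h.2
    · exact absurd h.2 (hlt i j).ne
    · exact absurd h.2 (hlt j i).ne'
    · exact Fin.natAdd_injective _ _ h.2
  · rintro ⟨⟨i, j⟩, hij : i < j⟩
    by_cases hi : i ∈ A <;> by_cases hj : j ∈ A <;>
      simp only [edgeValues, blockPattern, Function.comp_apply, hi, hj, if_true, if_false]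
    · exact hω _ _ _ _ _ _ hij h₀₁
    · exact hω _ _ _ _ _ _ (hlt i j) h₀₁
    · rw [hW]
      exact hω _ _ _ _ _ _ (hlt j i) h₀₁
    · exact hω _ _ _ _ _ _ ((Fin.natAdd_lt_natAdd_iff m).2 hij) h₀₁

theorem exists_le_abs_sub_add_abs_sub {T : Type*} (c : T → T → ℝ) {X₁ Y₁ X₂ Y₂ : T} {ρ : ℝ}
    (h : c X₁ Y₁ + ρ ≤ c X₂ Y₂) : ∃ X Y, ρ / 3 ≤ |c X X - c X Y| + |c Y Y - c X Y| := by
  -- Otherwise `c X₁ Y₁, c X₁ X₁, c X₂ X₂, c X₂ Y₂` is a chain of steps summing to less than `ρ`.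
  by_contra! hc
  have h₁ := hc X₁ Y₁
  have h₂ := hc X₁ X₂
  have h₃ := hc X₂ Y₂
  linarith [le_abs_self (c X₁ X₁ - c X₁ Y₁), neg_le_abs (c X₁ X₁ - c X₁ X₂),
    le_abs_self (c X₂ X₂ - c X₁ X₂), neg_le_abs (c X₂ X₂ - c X₂ Y₂),
    abs_nonneg (c Y₁ Y₁ - c X₁ Y₁), abs_nonneg (c Y₂ Y₂ - c X₂ Y₂)]

noncomputable def unitIntervalVolume : Measure ℝ := volume.restrict (Set.Icc 0 1)

instance : IsProbabilityMeasure unitIntervalVolume :=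
  ⟨by simp [unitIntervalVolume]⟩

theorem exists_approx_blockPattern {m : ℕ} (hm : 0 < m)
    {Φ : ({q : Fin m × Fin m // q.1 < q.2} → ℝ) → ℝ} {a : ℝ} {W : ℝ → ℝ → ℝ} (hW : IsGraphon W)
    (hae : ∀ᵐ x ∂Measure.pi fun _ : Fin m => unitIntervalVolume, Φ (edgeValues W x) = a)
    {q ρ : ℝ} (hlow : unitIntervalVolume.prod unitIntervalVolume {z | W z.1 z.2 ≤ q} ≠ 0)
    (hhigh : unitIntervalVolume.prod unitIntervalVolume {z | q + ρ ≤ W z.1 z.2} ≠ 0)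
    {ε : ℝ} (hε : 0 < ε) :
    ∃ u v s : ℝ, u ∈ Set.Icc 0 1 ∧ v ∈ Set.Icc 0 1 ∧ s ∈ Set.Icc 0 1 ∧
      ρ / 3 ≤ |u - s| + |v - s| ∧ ∀ A : Finset (Fin m), ∃ w, (∀ q, w q ∈ Set.Icc 0 1) ∧
        Φ w = a ∧ ∀ q, |w q - blockPattern A u v s q| < ε := by
  obtain ⟨hWm, hWsymm, hW01⟩ := hW
  obtain ⟨N, hN⟩ := exists_strictMono_monochromatic
    (C := Fin 4 → Fin 4 → Fin (⌊ε⁻¹⌋₊ + 1)) (m + m)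
  obtain ⟨ω₀, ⟨hω₀L, hω₀H⟩, hgood⟩ := Measure.exists_mem_of_measure_ne_zero_of_ae
    (measure_setOf_blocks_cross_mem_ne_zero (hWm measurableSet_Iic) (hWm measurableSet_Ici)
      hlow hhigh (Fin N))
    (ae_restrict_of_ae (ae_forall_comp_of_injective hae))
  obtain ⟨g, hg, -, γ, hγ⟩ := hN (Fin N) Finset.univ (by simp)
    fun i j X Y => gridCell ε (W (ω₀ (X, i)) (ω₀ (Y, j)))
  let ω : Fin 4 × Fin (m + m) → ℝ := ω₀ ∘ Prod.map id g
  have hω : ∀ X Y i j i' j', i < j → i' < j' →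
      |W (ω (X, i)) (ω (Y, j)) - W (ω (X, i')) (ω (Y, j'))| < ε :=
    fun X Y i j i' j' hij hij' => abs_sub_lt_of_gridCell_eq hε (hW01 _ _) (hW01 _ _)
      ((congrFun₂ (hγ i j hij) X Y).trans (congrFun₂ (hγ i' j' hij') X Y).symm)
  let i₀ : Fin (m + m) := ⟨0, by omega⟩
  let i₁ : Fin (m + m) := ⟨1, by omega⟩
  have hlow₀ : W (ω (0, i₀)) (ω (1, i₁)) ≤ q := hω₀L (g i₀) (g i₁)
  have hhigh₀ : q + ρ ≤ W (ω (2, i₀)) (ω (3, i₁)) := hω₀H (g i₀) (g i₁)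
  obtain ⟨X, Y, hXY⟩ := exists_le_abs_sub_add_abs_sub (fun X Y => W (ω (X, i₀)) (ω (Y, i₁)))
    (X₁ := 0) (Y₁ := 1) (X₂ := 2) (Y₂ := 3) (ρ := ρ) (by linarith)
  refine ⟨_, _, _, hW01 _ _, hW01 _ _, hW01 _ _, hXY, fun A => ?_⟩
  obtain ⟨σ, hσ, hclose⟩ := exists_injective_abs_edgeValues_sub_blockPattern_lt hWsymm hω X Y
    (show i₀ < i₁ from Fin.mk_lt_mk.2 one_pos) A
  exact ⟨edgeValues W (ω ∘ σ), fun _ => hW01 _ _,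
    hgood _ ((Function.injective_id.prodMap hg.injective).comp hσ), hclose⟩

theorem continuous_blockPattern {m : ℕ} (A : Finset (Fin m)) :
    Continuous fun t : ℝ × ℝ × ℝ => blockPattern A t.1 t.2.1 t.2.2 :=
  continuous_pi fun q => by unfold blockPattern; split_ifs <;> fun_prop

theorem blockPattern_mem_Icc {m : ℕ} (A : Finset (Fin m)) {u v s : ℝ} (hu : u ∈ Set.Icc 0 1)
    (hv : v ∈ Set.Icc 0 1) (hs : s ∈ Set.Icc 0 1) (q : {q : Fin m × Fin m // q.1 < q.2}) :
    blockPattern A u v s q ∈ Set.Icc 0 1 := by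
  unfold blockPattern; split_ifs <;> assumption

theorem exists_blockPattern_of_ae_eq {m : ℕ} (hm : 0 < m)
    {Φ : ({q : Fin m × Fin m // q.1 < q.2} → ℝ) → ℝ}
    (hΦ : ContinuousOn Φ (Set.univ.pi fun _ => Set.Icc (0 : ℝ) 1)) {a : ℝ} {W : ℝ → ℝ → ℝ}
    (hW : IsGraphon W)
    (hnc : ¬ ∃ c : ℝ, (fun z : ℝ × ℝ => W z.1 z.2) =ᵐ[volume.restrict unitSquare] fun _ => c)
    (hae : ∀ᵐ x ∂volume.restrict (unitBox m), Φ (edgeValues W x) = a) :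
    ∃ u v s : ℝ, u ∈ Set.Icc 0 1 ∧ v ∈ Set.Icc 0 1 ∧ s ∈ Set.Icc 0 1 ∧ ¬ (u = v ∧ v = s) ∧
      ∀ A : Finset (Fin m), Φ (blockPattern A u v s) = a := by
  have hsquare : volume.restrict unitSquare = unitIntervalVolume.prod unitIntervalVolume := by
    rw [unitIntervalVolume, Measure.prod_restrict, ← Measure.volume_eq_prod, unitSquare]
  have hbox : volume.restrict (unitBox m) = Measure.pi fun _ => unitIntervalVolume := by
    rw [unitBox, volume_pi, Measure.restrict_pi_pi]
    rfl
  rw [hsquare] at hnc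
  rw [hbox] at hae
  obtain ⟨q, ρ, hρ, hlow, hhigh⟩ := exists_measure_le_ne_zero_and_measure_add_le_ne_zero hnc
  let K : Set (ℝ × ℝ × ℝ) := (Set.Icc 0 1 ×ˢ Set.Icc 0 1 ×ˢ Set.Icc 0 1) ∩
    {t | ρ / 3 ≤ |t.1 - t.2.2| + |t.2.1 - t.2.2|}
  have hK : IsCompact K := (isCompact_Icc.prod (isCompact_Icc.prod isCompact_Icc)).inter_right
    (isClosed_le continuous_const (by fun_prop))
  obtain ⟨⟨u, v, s⟩, ⟨⟨hu, hv, hs⟩, hsep⟩, hA⟩ := exists_forall_eq_of_forall_approx hK hΦ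
    continuous_blockPattern (fun A t ht q _ => blockPattern_mem_Icc A ht.1.1 ht.1.2.1 ht.1.2.2 q)
    fun ε hε => by
      obtain ⟨u, v, s, hu, hv, hs, hsep, hA⟩ :=
        exists_approx_blockPattern hm hW hae hlow hhigh hε
      refine ⟨(u, v, s), ⟨⟨hu, hv, hs⟩, hsep⟩, fun A => ?_⟩
      obtain ⟨w, hw, hwa, hwA⟩ := hA A
      exact ⟨w, fun q _ => hw q, hwa, (dist_pi_lt_iff hε).2 fun q => hwA q⟩
  refine ⟨u, v, s, hu, hv, hs, ?_, hA⟩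
  rintro ⟨rfl, rfl⟩
  simp only [Set.mem_ofPred_eq, sub_self, abs_zero, add_zero] at hsep
  linarith

/-- The graphon of (ii). -/
noncomputable def stepGraphon (u v s : ℝ) (x y : ℝ) : ℝ :=
  if x ≤ 1 / 2 then (if y ≤ 1 / 2 then v else s) else (if y ≤ 1 / 2 then s else u)

theorem isGraphon_stepGraphon {u v s : ℝ} (hu : u ∈ Set.Icc 0 1) (hv : v ∈ Set.Icc 0 1)
    (hs : s ∈ Set.Icc 0 1) : IsGraphon (stepGraphon u v s) := by
  refine ⟨?_, fun x y => ?_, fun x y => ?_⟩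
  · exact Measurable.ite (measurableSet_le measurable_fst measurable_const)
      (Measurable.ite (measurableSet_le measurable_snd measurable_const) measurable_const
        measurable_const)
      (Measurable.ite (measurableSet_le measurable_snd measurable_const) measurable_const
        measurable_const)
  · unfold stepGraphon; split_ifs <;> rfl
  · unfold stepGraphon; split_ifs <;> assumption

theorem edgeValues_stepGraphon {m : ℕ} (u v s : ℝ) (x : Fin m → ℝ) :
    edgeValues (stepGraphon u v s) x = blockPattern {i | 1 / 2 < x i} u v s := by
  funext q
  simp only [edgeValues, blockPattern, stepGraphon, Finset.mem_filter, Finset.mem_univ,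
    true_and, ← not_le]
  split_ifs <;> rfl

theorem stepGraphon_not_ae_eq_const {u v s : ℝ} (hne : ¬ (u = v ∧ v = s)) :
    ¬ ∃ c : ℝ, (fun z : ℝ × ℝ => stepGraphon u v s z.1 z.2)
      =ᵐ[volume.restrict unitSquare] fun _ => c := by
  rintro ⟨c, hc⟩
  have hlo : Set.Icc (0 : ℝ) (1 / 2) ⊆ Set.Icc 0 1 := Set.Icc_subset_Icc_right (by norm_num)
  have hhi : Set.Ioc (1 / 2 : ℝ) 1 ⊆ Set.Icc 0 1 := Set.Ioc_subset_Icc_self.trans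
    (Set.Icc_subset_Icc_left (by norm_num))
  have hvol : ∀ I J : Set ℝ, volume I ≠ 0 → volume J ≠ 0 → volume (I ×ˢ J) ≠ 0 :=
    fun I J hI hJ => by rw [Measure.volume_eq_prod, Measure.prod_prod]; exact mul_ne_zero hI hJ
  have hvlo : volume (Set.Icc (0 : ℝ) (1 / 2)) ≠ 0 := by simp
  have hvhi : volume (Set.Ioc (1 / 2 : ℝ) 1) ≠ 0 := by norm_num
  have hu := eq_of_ae_restrict_eq_const (t := u) (Set.prod_mono hhi hhi) (hvol _ _ hvhi hvhi)
    (fun z hz => by rw [stepGraphon, if_neg (not_le.2 hz.1.1), if_neg (not_le.2 hz.2.1)]) hc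
  have hv := eq_of_ae_restrict_eq_const (t := v) (Set.prod_mono hlo hlo) (hvol _ _ hvlo hvlo)
    (fun z hz => by rw [stepGraphon, if_pos hz.1.2, if_pos hz.2.2]) hc
  have hs := eq_of_ae_restrict_eq_const (t := s) (Set.prod_mono hlo hhi) (hvol _ _ hvlo hvhi)
    (fun z hz => by rw [stepGraphon, if_pos hz.1.2, if_neg (not_le.2 hz.2.1)]) hc
  exact hne ⟨hu.trans hv.symm, hv.trans hs.symm⟩

theorem stepGraphon_not_eqOn_const {u v s : ℝ} (hne : ¬ (u = v ∧ v = s)) :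
    ¬ ∃ c : ℝ, ∀ x ∈ Set.Icc (0 : ℝ) 1, ∀ y ∈ Set.Icc (0 : ℝ) 1, stepGraphon u v s x y = c := by
  rintro ⟨c, hc⟩
  exact stepGraphon_not_ae_eq_const hne ⟨c, ae_restrict_of_forall_mem
    (measurableSet_Icc.prod measurableSet_Icc) fun z hz => hc _ hz.1 _ hz.2⟩

theorem eq_stepGraphon_of_eq_on_regions {W : ℝ → ℝ → ℝ} (hW : ∀ x y, W x y = W y x)
    {u v s : ℝ}
    (hu : ∀ x ∈ Set.Ioc (1 / 2 : ℝ) 1, ∀ y ∈ Set.Ioc (1 / 2 : ℝ) 1, W x y = u)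
    (hv : ∀ x ∈ Set.Icc (0 : ℝ) (1 / 2), ∀ y ∈ Set.Icc (0 : ℝ) (1 / 2), W x y = v)
    (hs : ∀ x ∈ Set.Icc (0 : ℝ) (1 / 2), ∀ y ∈ Set.Ioc (1 / 2 : ℝ) 1, W x y = s) :
    ∀ x ∈ Set.Icc (0 : ℝ) 1, ∀ y ∈ Set.Icc (0 : ℝ) 1, W x y = stepGraphon u v s x y := by
  intro x hx y hy
  unfold stepGraphon
  split_ifs with hx' hy' hy'
  · exact hv x ⟨hx.1, hx'⟩ y ⟨hy.1, hy'⟩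
  · exact hs x ⟨hx.1, hx'⟩ y ⟨not_le.1 hy', hy.2⟩
  · rw [hW]; exact hs y ⟨hy.1, hy'⟩ x ⟨not_le.1 hx', hx.2⟩
  · exact hu x ⟨not_le.1 hx', hx.2⟩ y ⟨not_le.1 hy', hy.2⟩

theorem blockPattern_of_eq_on_regions {m : ℕ}
    {Φ : ({q : Fin m × Fin m // q.1 < q.2} → ℝ) → ℝ} {a : ℝ} {W : ℝ → ℝ → ℝ} (hW : IsGraphon W)
    {u v s : ℝ} (hu : ∀ x ∈ Set.Ioc (1 / 2 : ℝ) 1, ∀ y ∈ Set.Ioc (1 / 2 : ℝ) 1, W x y = u)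
    (hv : ∀ x ∈ Set.Icc (0 : ℝ) (1 / 2), ∀ y ∈ Set.Icc (0 : ℝ) (1 / 2), W x y = v)
    (hs : ∀ x ∈ Set.Icc (0 : ℝ) (1 / 2), ∀ y ∈ Set.Ioc (1 / 2 : ℝ) 1, W x y = s)
    (hnc : ¬ ∃ c : ℝ, ∀ x ∈ Set.Icc (0 : ℝ) 1, ∀ y ∈ Set.Icc (0 : ℝ) 1, W x y = c)
    (hΦ : ∀ x : Fin m → ℝ, (∀ i, x i ∈ Set.Icc (0 : ℝ) 1) → Φ (edgeValues W x) = a) :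
    u ∈ Set.Icc 0 1 ∧ v ∈ Set.Icc 0 1 ∧ s ∈ Set.Icc 0 1 ∧ ¬ (u = v ∧ v = s) ∧
      ∀ A : Finset (Fin m), Φ (blockPattern A u v s) = a := by
  have hWstep := eq_stepGraphon_of_eq_on_regions hW.2.1 hu hv hs
  have h0 : (0 : ℝ) ∈ Set.Icc 0 (1 / 2) := ⟨le_rfl, by norm_num⟩
  have h1 : (1 : ℝ) ∈ Set.Ioc (1 / 2) 1 := ⟨by norm_num, le_rfl⟩
  refine ⟨hu 1 h1 1 h1 ▸ hW.2.2 1 1, hv 0 h0 0 h0 ▸ hW.2.2 0 0, hs 0 h0 1 h1 ▸ hW.2.2 0 1, ?_,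
    fun A => ?_⟩
  · rintro ⟨rfl, rfl⟩
    refine hnc ⟨u, fun x hx y hy => (hWstep x hx y hy).trans ?_⟩
    unfold stepGraphon; split_ifs <;> rfl
  · let x : Fin m → ℝ := fun i => if i ∈ A then 1 else 0
    have hx : ∀ i, x i ∈ Set.Icc (0 : ℝ) 1 := fun i => by
      unfold x; split_ifs <;> norm_num
    have hA : ({i | 1 / 2 < x i} : Finset (Fin m)) = A := by
      ext i; by_cases hi : i ∈ A <;> norm_num [x, hi]
    have hWx : edgeValues W x = edgeValues (stepGraphon u v s) x :=
      funext fun q => hWstep _ (hx _) _ (hx _)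
    rw [← hA, ← edgeValues_stepGraphon, ← hWx]
    exact hΦ x hx

/-- **Theorem (TD0).** For continuous `Φ` of the variables `w_{ij}` (`i < j`) and `a ∈ ℝ`,
the following are equivalent: (i) some graphon `W`, not a.e. constant, has `Φ_W = a` a.e.;
(ii) some non-constant 2-type graphon (constant on the three half-square regions) has
`Φ_W = a` everywhere on `[0,1]^m`; (iii) some `u,v,s ∈ [0,1]`, not all equal, satisfy
`Φ((w_{ij})) = a` for every `A ⊆ [m]`, where `w_{ij} = u` if `i,j ∈ A`, `v` if `i,j ∉ A`,
and `s` otherwise. -/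
theorem stmt12 (m : ℕ) (hm : 2 ≤ m)
    (Φ : ({q : Fin m × Fin m // q.1 < q.2} → ℝ) → ℝ)
    (hΦ : ContinuousOn Φ (Set.univ.pi fun _ => Set.Icc (0 : ℝ) 1)) (a : ℝ) :
    ((∃ W : ℝ → ℝ → ℝ, IsGraphon W ∧
        ¬ (∃ c : ℝ, (fun z : ℝ × ℝ => W z.1 z.2)
            =ᵐ[volume.restrict unitSquare] fun _ => c) ∧
        (∀ᵐ x ∂(volume.restrict (unitBox m)),
          Φ (fun q => W (x q.1.1) (x q.1.2)) = a))
      ↔ (∃ u v s : ℝ, u ∈ Set.Icc (0 : ℝ) 1 ∧ v ∈ Set.Icc (0 : ℝ) 1 ∧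
          s ∈ Set.Icc (0 : ℝ) 1 ∧ ¬ (u = v ∧ v = s) ∧
          ∀ A : Finset (Fin m),
            Φ (fun q => if q.1.1 ∈ A then (if q.1.2 ∈ A then u else s)
                else (if q.1.2 ∈ A then s else v)) = a))
    ∧ ((∃ W : ℝ → ℝ → ℝ, IsGraphon W ∧
        (∃ u v s : ℝ,
          (∀ x ∈ Set.Ioc (1/2 : ℝ) 1, ∀ y ∈ Set.Ioc (1/2 : ℝ) 1, W x y = u) ∧
          (∀ x ∈ Set.Icc (0 : ℝ) (1/2), ∀ y ∈ Set.Icc (0 : ℝ) (1/2), W x y = v) ∧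
          (∀ x ∈ Set.Icc (0 : ℝ) (1/2), ∀ y ∈ Set.Ioc (1/2 : ℝ) 1, W x y = s)) ∧
        ¬ (∃ c : ℝ, ∀ x ∈ Set.Icc (0 : ℝ) 1, ∀ y ∈ Set.Icc (0 : ℝ) 1, W x y = c) ∧
        (∀ x : Fin m → ℝ, (∀ i, x i ∈ Set.Icc (0 : ℝ) 1) →
          Φ (fun q => W (x q.1.1) (x q.1.2)) = a))
      ↔ (∃ u v s : ℝ, u ∈ Set.Icc (0 : ℝ) 1 ∧ v ∈ Set.Icc (0 : ℝ) 1 ∧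
          s ∈ Set.Icc (0 : ℝ) 1 ∧ ¬ (u = v ∧ v = s) ∧
          ∀ A : Finset (Fin m),
            Φ (fun q => if q.1.1 ∈ A then (if q.1.2 ∈ A then u else s)
                else (if q.1.2 ∈ A then s else v)) = a)) := by
  refine ⟨⟨?_, ?_⟩, ⟨?_, ?_⟩⟩
  · rintro ⟨W, hW, hnc, hae⟩
    exact exists_blockPattern_of_ae_eq (by omega) hΦ hW hnc hae
  · rintro ⟨u, v, s, hu, hv, hs, hne, hA⟩
    exact ⟨stepGraphon u v s, isGraphon_stepGraphon hu hv hs, stepGraphon_not_ae_eq_const hne,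
      .of_forall fun x => (congrArg Φ (edgeValues_stepGraphon u v s x)).trans (hA _)⟩
  · rintro ⟨W, hW, ⟨u, v, s, hu, hv, hs⟩, hnc, hΦW⟩
    exact ⟨u, v, s, blockPattern_of_eq_on_regions hW hu hv hs hnc hΦW⟩
  · rintro ⟨u, v, s, hu, hv, hs, hne, hA⟩
    refine ⟨stepGraphon u v s, isGraphon_stepGraphon hu hv hs, ⟨u, v, s, ?_, ?_, ?_⟩,
      stepGraphon_not_eqOn_const hne,
      fun x _ => (congrArg Φ (edgeValues_stepGraphon u v s x)).trans (hA _)⟩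
    · exact fun x hx y hy => by rw [stepGraphon, if_neg (not_le.2 hx.1), if_neg (not_le.2 hy.1)]
    · exact fun x hx y hy => by rw [stepGraphon, if_pos hx.2, if_pos hy.2]
    · exact fun x hx y hy => by rw [stepGraphon, if_pos hx.2, if_neg (not_le.2 hy.1)]
end

section
/- Let m ≥ 3 be an integer. The function h(x) := (m−2)·log(1+mx) + m·log(1+x) − m·log(1+(m−1)x) satisfies h'(x) = m(m−1)(m−2)x² / ((1+x)(1+(m−1)x)(1+mx)) > 0 for all x > −1/m with x ≠ 0, hence h is strictly increasing on (−1/m, ∞); consequently, the only real number x > −1/m satisfying (1+(m−1)x)^m = (1+mx)^{m−2}(1+x)^m is x = 0. -/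
open Set Real

/-!
`h = logGap m` is the logarithm of `(1 + m x)^(m-2) (1 + x)^m / (1 + (m-1) x)^m`, so the equation
says `h x = 0 = h 0`. The derivative of `h` has a double zero at `0` and is positive elsewhere, which
still makes `h` strictly increasing, hence injective.
-/

lemma strictMonoOn_Ioi_of_hasDerivAt_pos_of_ne {f f' : ℝ → ℝ} {a c : ℝ} (hac : a < c)
    (hf : ∀ x, a < x → HasDerivAt f (f' x) x) (hf' : ∀ x, a < x → x ≠ c → 0 < f' x) :
    StrictMonoOn f (Ioi a) := by
  have hcont : ContinuousOn f (Ioi a) := fun x hx => (hf x hx).continuousAt.continuousWithinAt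
  have deriv_pos : ∀ x, a < x → x ≠ c → 0 < deriv f x := fun x hx hxc => by
    rw [(hf x hx).deriv]; exact hf' x hx hxc
  have left : StrictMonoOn f (Ioc a c) :=
    strictMonoOn_of_deriv_pos (convex_Ioc a c) (hcont.mono Ioc_subset_Ioi_self) fun x hx => by
      rw [interior_Ioc] at hx; exact deriv_pos x hx.1 hx.2.ne
  have right : StrictMonoOn f (Ici c) :=
    strictMonoOn_of_deriv_pos (convex_Ici c) (hcont.mono (Ici_subset_Ioi.mpr hac)) fun x hx => by
      rw [interior_Ici] at hx; exact deriv_pos x (hac.trans hx) hx.ne'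
  rw [← Ioc_union_Ici_eq_Ioi hac]
  exact left.union right (isGreatest_Ioc hac) isLeast_Ici

lemma one_add_mul_pos_of_neg_inv_lt {m k x : ℝ} (hm : 0 < m) (hk₀ : 0 ≤ k) (hkm : k ≤ m)
    (hx : -1 / m < x) : 0 < 1 + k * x := by
  have hmx : -1 < m * x := by rwa [div_lt_iff₀ hm, mul_comm] at hx
  rcases le_or_gt 0 x with hx₀ | hx₀
  · positivity
  · nlinarith

noncomputable def logGap (m x : ℝ) : ℝ :=
  (m - 2) * log (1 + m * x) + m * log (1 + x) - m * log (1 + (m - 1) * x)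

@[simp]
lemma logGap_zero (m : ℝ) : logGap m 0 = 0 := by
  simp [logGap]

noncomputable def logGapDeriv (m x : ℝ) : ℝ :=
  m * (m - 1) * (m - 2) * x ^ 2 / ((1 + x) * (1 + (m - 1) * x) * (1 + m * x))

section

variable {m x : ℝ}

lemma logGap_factors_pos (hm : 1 ≤ m) (hx : -1 / m < x) :
    0 < 1 + x ∧ 0 < 1 + (m - 1) * x ∧ 0 < 1 + m * x := by
  have hm₀ : 0 < m := by linarith
  refine ⟨?_, one_add_mul_pos_of_neg_inv_lt hm₀ (by linarith) (by linarith) hx,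
    one_add_mul_pos_of_neg_inv_lt hm₀ hm₀.le le_rfl hx⟩
  simpa using one_add_mul_pos_of_neg_inv_lt hm₀ zero_le_one hm hx

lemma hasDerivAt_log_one_add_mul (a : ℝ) (hx : 0 < 1 + a * x) :
    HasDerivAt (fun y => log (1 + a * y)) (a / (1 + a * x)) x := by
  simpa using (((hasDerivAt_id x).const_mul a).const_add 1).log hx.ne'

lemma hasDerivAt_logGap (hm : 1 ≤ m) (hx : -1 / m < x) :
    HasDerivAt (logGap m) (logGapDeriv m x) x := by
  obtain ⟨h₁, h₂, h₃⟩ := logGap_factors_pos hm hx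
  have := (((hasDerivAt_log_one_add_mul m h₃).const_mul (m - 2)).add
    ((hasDerivAt_log_one_add_mul 1 (by simpa using h₁)).const_mul m)).sub
    ((hasDerivAt_log_one_add_mul (m - 1) h₂).const_mul m)
  simp only [one_mul] at this
  refine this.congr_deriv ?_
  rw [logGapDeriv, mul_div_assoc', mul_div_assoc', mul_div_assoc', div_add_div _ _ h₃.ne' h₁.ne',
    div_sub_div _ _ (by positivity) h₂.ne', div_eq_div_iff (by positivity) (by positivity)]
  ring

lemma logGapDeriv_pos (hm : 2 < m) (hx : -1 / m < x) (hx₀ : x ≠ 0) : 0 < logGapDeriv m x := by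
  obtain ⟨h₁, h₂, h₃⟩ := logGap_factors_pos (by linarith) hx
  have : 0 < m - 2 := by linarith
  have : 0 < m - 1 := by linarith
  unfold logGapDeriv
  positivity

lemma strictMonoOn_logGap (hm : 2 < m) : StrictMonoOn (logGap m) (Ioi (-1 / m)) :=
  strictMonoOn_Ioi_of_hasDerivAt_pos_of_ne (div_neg_of_neg_of_pos (by norm_num) (by linarith))
    (fun _ hx => hasDerivAt_logGap (by linarith) hx) fun _ hx hx₀ => logGapDeriv_pos hm hx hx₀

end

lemma logGap_eq_zero_of_pow_eq {n : ℕ} (hn : 2 ≤ n) {x : ℝ} (hx : -1 / (n : ℝ) < x)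
    (h : (1 + ((n : ℝ) - 1) * x) ^ n = (1 + (n : ℝ) * x) ^ (n - 2) * (1 + x) ^ n) :
    logGap n x = 0 := by
  obtain ⟨h₁, -, h₃⟩ := logGap_factors_pos (by exact_mod_cast one_le_two.trans hn) hx
  have hlog := congrArg log h
  rw [log_pow, log_mul (by positivity) (by positivity), log_pow, log_pow,
    Nat.cast_sub hn, Nat.cast_two] at hlog
  unfold logGap
  linarith

/-- **Calculus step in Example (regular graphs).** For `m ≥ 3`, the function
`h(x) = (m−2) log(1+mx) + m log(1+x) − m log(1+(m−1)x)` has derivative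
`m(m−1)(m−2)x²/((1+x)(1+(m−1)x)(1+mx)) > 0` for `x > −1/m`, `x ≠ 0`; hence `h` is
strictly increasing on `(−1/m, ∞)`, and the only `x > −1/m` with
`(1+(m−1)x)^m = (1+mx)^(m−2) (1+x)^m` is `x = 0`. -/
theorem stmt19 (m : ℕ) (hm : 3 ≤ m) :
    (∀ x : ℝ, -1 / (m : ℝ) < x → x ≠ 0 →
      HasDerivAt (fun y : ℝ => ((m : ℝ) - 2) * Real.log (1 + m * y)
          + m * Real.log (1 + y) - m * Real.log (1 + ((m : ℝ) - 1) * y))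
        ((m : ℝ) * ((m : ℝ) - 1) * ((m : ℝ) - 2) * x ^ 2 /
          ((1 + x) * (1 + ((m : ℝ) - 1) * x) * (1 + m * x))) x
      ∧ 0 < (m : ℝ) * ((m : ℝ) - 1) * ((m : ℝ) - 2) * x ^ 2 /
          ((1 + x) * (1 + ((m : ℝ) - 1) * x) * (1 + m * x)))
    ∧ StrictMonoOn (fun y : ℝ => ((m : ℝ) - 2) * Real.log (1 + m * y)
          + m * Real.log (1 + y) - m * Real.log (1 + ((m : ℝ) - 1) * y))
        (Set.Ioi (-1 / (m : ℝ)))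
    ∧ ∀ x : ℝ, -1 / (m : ℝ) < x →
        (1 + ((m : ℝ) - 1) * x) ^ m = (1 + (m : ℝ) * x) ^ (m - 2) * (1 + x) ^ m →
        x = 0 := by
  have hm' : (2 : ℝ) < m := by exact_mod_cast hm
  have hmono := strictMonoOn_logGap hm'
  refine ⟨fun x hx hx₀ => ⟨hasDerivAt_logGap (by linarith) hx, logGapDeriv_pos hm' hx hx₀⟩,
    hmono, fun x hx h => ?_⟩
  have hzero : -1 / (m : ℝ) < 0 := div_neg_of_neg_of_pos (by norm_num) (by linarith)
  exact hmono.injOn hx hzero <| by rw [logGap_eq_zero_of_pow_eq (by omega) hx h, logGap_zero]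
end
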